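/- arXiv:2510.04993 — 8 statements merged into one kernel-verified Lean document; each statement's English description precedes it below -/
import Mathlib

section
/- Let π be a permutation gate in 𝒞₃ that is in staircase form. Define an operation on 𝔽₂ⁿ by setting eᵢeⱼ := π(eᵢ+eⱼ) + eᵢ + eⱼ for all i,j ∈ [n] (so in particular eᵢeᵢ = 0 since π(0)=0) and extending bilinearly. Then this operation is a descending multiplication on 𝔽₂ⁿ. -/
/-! Common framework: qubit gates, the Pauli group, the Clifford hierarchy,
permutation gates, Toffoli gates and staircase form, descending multiplications,
multilinear polynomial representations. -/

/-- Vectors in `𝔽₂ⁿ`, indexing computational basis states. -/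
abbrev QV (n : ℕ) := Fin n → ZMod 2

/-- `n`-qubit gates: `2ⁿ × 2ⁿ` complex matrices indexed by `𝔽₂ⁿ`. -/
abbrev QMat (n : ℕ) := Matrix (QV n) (QV n) ℂ

/-- Standard basis vector `eᵢ` of `𝔽₂ⁿ`. -/
def stdBasis (n : ℕ) (i : Fin n) : QV n := fun m => if m = i then 1 else 0

/-- The gate `X^u Z^z`, sending `|b⟩` to `(-1)^(z·b) |b+u⟩`. -/
noncomputable def XZGate (n : ℕ) (u z : QV n) : QMat n :=
  fun a b => if a = b + u then (-1 : ℂ) ^ (∑ i, (z i).val * (b i).val) else 0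

/-- The Pauli group on `n` qubits: gates `c·P₁⊗⋯⊗Pₙ`, `c ∈ {±1, ±i}`,
`Pᵢ ∈ {I,X,Y,Z}`, equivalently phases times `X^u Z^z`. -/
def PauliGroup (n : ℕ) : Set (QMat n) :=
  { P | ∃ (c : ℂ) (u z : QV n),
      (c = 1 ∨ c = -1 ∨ c = Complex.I ∨ c = -Complex.I) ∧ P = c • XZGate n u z }

/-- Level `k` of the Clifford hierarchy `𝒞ₖ` (level 1 is the Pauli group,
level 2 the Clifford group; level 0 is junk/empty). -/
def CliffordLevel (n : ℕ) : ℕ → Set (QMat n)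
  | 0 => ∅
  | 1 => PauliGroup n
  | (k+2) => { U | U ∈ Matrix.unitaryGroup (QV n) ℂ ∧
      ∀ P ∈ PauliGroup n, U * P * star U ∈ CliffordLevel n (k+1) }

/-- The permutation gate of a permutation `f` of `𝔽₂ⁿ`: sends `|v⟩` to `|f v⟩`. -/
noncomputable def permGate (n : ℕ) (f : QV n ≃ QV n) : QMat n :=
  fun a b => if a = f b then 1 else 0

/-- A diagonal gate. -/
def IsDiagonal (n : ℕ) (d : QMat n) : Prop := ∀ a b : QV n, a ≠ b → d a b = 0

/-- A gate is semi-Clifford if it equals `φ₁ d φ₂` for Clifford `φ₁, φ₂` and diagonal `d`. -/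
def IsSemiClifford (n : ℕ) (U : QMat n) : Prop :=
  ∃ φ₁ d φ₂ : QMat n, φ₁ ∈ CliffordLevel n 2 ∧ φ₂ ∈ CliffordLevel n 2 ∧
    IsDiagonal n d ∧ U = φ₁ * d * φ₂

/-- The underlying map of the Toffoli gate `TOF_{i,j,k}`: `v ↦ v + (vᵢvⱼ)·eₖ`. -/
def tofFun (n : ℕ) (i j k : Fin n) (v : QV n) : QV n :=
  fun m => if m = k then v m + v i * v j else v m

/-- A map on `𝔽₂ⁿ` is in staircase form if it is a product (applied left-to-right)
of pairwise distinct Toffoli gates `TOF_{i,j,k}` with `i<j<k` and with targets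
nondecreasing in the order the gates are applied. -/
def IsStaircase (n : ℕ) (g : QV n → QV n) : Prop :=
  ∃ L : List (Fin n × Fin n × Fin n),
    L.Nodup ∧
    (∀ t ∈ L, t.1 < t.2.1 ∧ t.2.1 < t.2.2) ∧
    List.Chain' (fun s t => s.2.2 ≤ t.2.2) L ∧
    g = fun v => L.foldl (fun w t => tofFun n t.1 t.2.1 t.2.2 w) v

/-- A descending multiplication on `𝔽₂ⁿ`: bilinear, associative, commutative,
`eᵢeᵢ = 0`, and for `i < j`, `eᵢeⱼ ∈ span{eₖ : k > j}`. -/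
def IsDescendingMul (n : ℕ) (mul : QV n → QV n → QV n) : Prop :=
  (∀ u v w : QV n, mul (u + v) w = mul u w + mul v w) ∧
  (∀ u v w : QV n, mul u (v + w) = mul u v + mul u w) ∧
  (∀ u v w : QV n, mul (mul u v) w = mul u (mul v w)) ∧
  (∀ u v : QV n, mul u v = mul v u) ∧
  (∀ i : Fin n, mul (stdBasis n i) (stdBasis n i) = 0) ∧
  (∀ i j : Fin n, i < j → ∀ m : Fin n, m ≤ j → mul (stdBasis n i) (stdBasis n j) m = 0)

/-- The product `∏_{i ∈ l} eᵢ` under a multiplication, for a list `l` (junk `0` on `[]`). -/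
def dmProdList (n : ℕ) (mul : QV n → QV n → QV n) : List (Fin n) → QV n
  | [] => 0
  | [i] => stdBasis n i
  | i :: j :: rest => mul (stdBasis n i) (dmProdList n mul (j :: rest))

/-- The product `∏_{i ∈ T} eᵢ` under a multiplication. -/
def dmProd (n : ℕ) (mul : QV n → QV n → QV n) (T : Finset (Fin n)) : QV n :=
  dmProdList n mul (T.sort (· ≤ ·))

/-- `g` is the map `∑_{i∈S} eᵢ ↦ ∑_{∅≠T⊆S} ∏_{i∈T} eᵢ` associated to a multiplication. -/
def dmPiSpec (n : ℕ) (mul : QV n → QV n → QV n) (g : QV n → QV n) : Prop :=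
  ∀ S : Finset (Fin n),
    g (∑ i ∈ S, stdBasis n i) = ∑ T ∈ S.powerset.erase ∅, dmProd n mul T

/-- The bilinear extension of `eᵢeⱼ := g(eᵢ+eⱼ) + eᵢ + eⱼ`. -/
def inducedMul (n : ℕ) (g : QV n → QV n) (u v : QV n) : QV n :=
  ∑ i : Fin n, ∑ j : Fin n,
    (u i * v j) • (g (stdBasis n i + stdBasis n j) + stdBasis n i + stdBasis n j)

/-- Coefficient of the monomial `∏_{i∈T} aᵢ` in the unique multilinear polynomial
over `𝔽₂` representing `g : 𝔽₂ⁿ → 𝔽₂` (Möbius inversion over `𝔽₂`). -/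
def mlCoeff (n : ℕ) (g : QV n → ZMod 2) (T : Finset (Fin n)) : ZMod 2 :=
  ∑ R ∈ T.powerset, g (∑ i ∈ R, stdBasis n i)

/-- Strictly lower triangular matrix. -/
def StrictLowerTri (n : ℕ) (A : Matrix (Fin n) (Fin n) (ZMod 2)) : Prop :=
  ∀ p q : Fin n, p ≤ q → A p q = 0

/-- Multiplication of basis vectors for the gate `U_k`: the basis of `𝔽₂^(2^k-1)` is
indexed by nonempty subsets `S ⊆ [k]`, encoded as indices `a` via the binary digits of
`a+1`; `e_S e_T = e_{S∪T}` if `S ∩ T = ∅` and `e_S e_T = 0` otherwise. -/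
def ukBasisMul (k : ℕ) (a b : Fin (2 ^ k - 1)) : QV (2 ^ k - 1) :=
  if (a.val + 1) &&& (b.val + 1) = 0 then
    (if h : a.val + b.val + 1 < 2 ^ k - 1 then stdBasis (2 ^ k - 1) ⟨a.val + b.val + 1, h⟩
     else 0)
  else 0

/-- The descending multiplication defining `U_k`, extended bilinearly. -/
def ukMul (k : ℕ) (u v : QV (2 ^ k - 1)) : QV (2 ^ k - 1) :=
  ∑ a : Fin (2 ^ k - 1), ∑ b : Fin (2 ^ k - 1), (u a * v b) • ukBasisMul k a b

/-! Conjugating the translation `v ↦ v + t` by `π` gives the permutation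
`Aₜ = π ∘ (· + t) ∘ π⁻¹`, whose gate is Clifford because `π ∈ 𝒞₃`; a Clifford permutation
gate is affine. The `Aₜ` commute, hence so do their linear parts `Lₜ`. The staircase form
forces `π 0 = 0` and `π eᵢ = eᵢ`, which turns the definition into `eᵢeⱼ = (L_{eᵢ} + 1) eⱼ`:
left multiplication by `u` is the endomorphism `∑ uᵢ (L_{eᵢ} + 1)`. These endomorphisms
commute, which together with commutativity of the product gives associativity. Finally a
Toffoli gate targeting a coordinate `≤ j` has both controls `< j`, so `π (eᵢ + eⱼ)` agrees
with `eᵢ + eⱼ` up to coordinate `j`: that is the descending condition. -/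

lemma XZGate_mem_pauliGroup (n : ℕ) (u z : QV n) : XZGate n u z ∈ PauliGroup n :=
  ⟨1, u, z, Or.inl rfl, (one_smul _ _).symm⟩

lemma permGate_mul_XZGate_mul_star (n : ℕ) (f : QV n ≃ QV n) (t : QV n) :
    permGate n f * XZGate n t 0 * star (permGate n f) =
      permGate n (f.permCongr (Equiv.addRight t)) := by
  have hX : permGate n f * XZGate n t 0 =
      Matrix.of fun a b => if a = f (b + t) then 1 else 0 := by
    ext a b
    rw [Matrix.mul_apply, Finset.sum_eq_single (b + t)]
    · simp [permGate, XZGate]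
    · intro c _ hc
      simp [XZGate, hc]
    · simp
  ext a b
  rw [hX, Matrix.mul_apply, Finset.sum_eq_single (f.symm b)]
  · simp [permGate]
    congr
  · intro c _ hc
    have : b ≠ f c := fun h => hc (by simp [h])
    simp [permGate, this]
  · simp

lemma exists_eq_add_of_permGate_mem_pauliGroup {n : ℕ} {σ : QV n ≃ QV n}
    (h : permGate n σ ∈ PauliGroup n) : ∃ u, ∀ v, σ v = v + u := by
  obtain ⟨c, u, z, -, hP⟩ := h
  refine ⟨u, fun v => ?_⟩
  by_contra hne
  have := congrFun (congrFun hP (σ v)) v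
  simp [permGate, XZGate, hne] at this

def IsAffine {V : Type*} [Add V] (A : V → V) : Prop :=
  ∀ s, ∃ u, ∀ w, A (w + s) = A w + u

lemma isAffine_of_permGate_mem_cliffordLevel_two {n : ℕ} {σ : QV n ≃ QV n}
    (h : permGate n σ ∈ CliffordLevel n 2) : IsAffine σ := by
  intro t
  have hX := h.2 (XZGate n t 0) (XZGate_mem_pauliGroup n t 0)
  rw [permGate_mul_XZGate_mul_star] at hX
  obtain ⟨u, hu⟩ := exists_eq_add_of_permGate_mem_pauliGroup hX
  exact ⟨u, fun v => by simpa using hu (σ v)⟩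

lemma isAffine_permCongr_addRight_of_permGate_mem_cliffordLevel_three {n : ℕ}
    {f : QV n ≃ QV n} (h : permGate n f ∈ CliffordLevel n 3) (t : QV n) :
    IsAffine (f.permCongr (Equiv.addRight t)) := by
  have hX := h.2 (XZGate n t 0) (XZGate_mem_pauliGroup n t 0)
  rw [permGate_mul_XZGate_mul_star] at hX
  exact isAffine_of_permGate_mem_cliffordLevel_two hX

namespace IsAffine

variable {V : Type*} [AddCommGroup V] {A B : V → V}

lemma map_add (hA : IsAffine A) (w s : V) : A (w + s) = A w + (A s - A 0) := by
  obtain ⟨u, hu⟩ := hA s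
  rw [hu, ← zero_add s, hu 0, add_sub_cancel_left]

def linearPart (hA : IsAffine A) : V →+ V :=
  AddMonoidHom.mk' (fun s => A s - A 0) fun s s' => by
    simp only [hA.map_add s s']
    abel

lemma linearPart_apply (hA : IsAffine A) (s : V) : hA.linearPart s = A s - A 0 := rfl

lemma linearPart_linearPart (hA : IsAffine A) (hB : IsAffine B) (s : V) :
    hA.linearPart (hB.linearPart s) = A (B s) - A (B 0) := by
  have h := hA.map_add (B s - B 0) (B 0)
  rw [sub_add_cancel] at h
  rw [linearPart_apply, linearPart_apply, h]
  abel

lemma linearPart_comm (hA : IsAffine A) (hB : IsAffine B) (hAB : ∀ x, A (B x) = B (A x))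
    (s : V) : hA.linearPart (hB.linearPart s) = hB.linearPart (hA.linearPart s) := by
  rw [linearPart_linearPart, linearPart_linearPart, hAB, hAB]

end IsAffine

section Staircase

variable {n : ℕ}

lemma tofFun_apply_of_le {i j k m m' : Fin n} (hij : i < j) (hjk : j < k) {w : QV n}
    (hw : ∀ a b, a < b → b < m → w a * w b = 0) (hm' : m' ≤ m) :
    tofFun n i j k w m' = w m' := by
  unfold tofFun
  split_ifs with hk
  · subst hk
    rw [hw i j hij (hjk.trans_le hm'), add_zero]
  · rfl

lemma foldl_tofFun_apply_of_le (L : List (Fin n × Fin n × Fin n))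
    (hL : ∀ t ∈ L, t.1 < t.2.1 ∧ t.2.1 < t.2.2) {m : Fin n} {w : QV n}
    (hw : ∀ a b, a < b → b < m → w a * w b = 0) {m' : Fin n} (hm' : m' ≤ m) :
    L.foldl (fun w t => tofFun n t.1 t.2.1 t.2.2 w) w m' = w m' := by
  induction L generalizing w with
  | nil => rfl
  | cons t L ih =>
    obtain ⟨h1, h2⟩ := hL t List.mem_cons_self
    have hfix : ∀ m' ≤ m, tofFun n t.1 t.2.1 t.2.2 w m' = w m' :=
      fun m' hm' => tofFun_apply_of_le h1 h2 hw hm'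
    rw [List.foldl_cons, ih (fun s hs => hL s (List.mem_cons_of_mem t hs)) ?_, hfix m' hm']
    intro a b hab hbm
    rw [hfix a (hab.trans hbm).le, hfix b hbm.le]
    exact hw a b hab hbm

namespace IsStaircase

variable {g : QV n → QV n}

lemma apply_eq_of_mul_eq_zero (hg : IsStaircase n g) {x : QV n} {m : Fin n}
    (hx : ∀ a b, a < b → b < m → x a * x b = 0) : g x m = x m := by
  obtain ⟨L, -, hL, -, rfl⟩ := hg
  exact foldl_tofFun_apply_of_le L hL hx le_rfl

lemma map_zero (hg : IsStaircase n g) : g 0 = 0 :=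
  funext fun _ => hg.apply_eq_of_mul_eq_zero fun _ _ _ _ => zero_mul _

lemma map_stdBasis (hg : IsStaircase n g) (i : Fin n) : g (stdBasis n i) = stdBasis n i :=
  funext fun _ => hg.apply_eq_of_mul_eq_zero fun a b hab _ => by
    unfold stdBasis
    split_ifs with ha hb <;> simp_all

lemma apply_stdBasis_add_stdBasis_of_le (hg : IsStaircase n g) {i j m : Fin n} (hm : m ≤ j) :
    g (stdBasis n i + stdBasis n j) m = (stdBasis n i + stdBasis n j) m :=
  hg.apply_eq_of_mul_eq_zero fun a b hab hbm => by
    have hbj : b < j := hbm.trans_le hm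
    simp only [stdBasis, Pi.add_apply, if_neg (hab.trans hbj).ne, if_neg hbj.ne]
    split_ifs with ha hb <;> simp_all

end IsStaircase

end Staircase

section InducedMul

variable {n : ℕ} (g : QV n → QV n)

lemma sum_smul_stdBasis (v : QV n) : ∑ j, v j • stdBasis n j = v := by
  ext m
  simp [stdBasis]

lemma inducedMul_add_left (u v w : QV n) :
    inducedMul n g (u + v) w = inducedMul n g u w + inducedMul n g v w := by
  simp only [inducedMul, Pi.add_apply, add_mul, add_smul, Finset.sum_add_distrib]

lemma inducedMul_comm (u v : QV n) : inducedMul n g u v = inducedMul n g v u := by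
  rw [inducedMul, Finset.sum_comm]
  refine Finset.sum_congr rfl fun j _ => Finset.sum_congr rfl fun i _ => ?_
  rw [mul_comm, add_comm (stdBasis n j), add_right_comm]

lemma inducedMul_add_right (u v w : QV n) :
    inducedMul n g u (v + w) = inducedMul n g u v + inducedMul n g u w := by
  rw [inducedMul_comm, inducedMul_add_left, inducedMul_comm g v, inducedMul_comm g w]

lemma inducedMul_stdBasis_stdBasis (i j : Fin n) :
    inducedMul n g (stdBasis n i) (stdBasis n j) =
      g (stdBasis n i + stdBasis n j) + stdBasis n i + stdBasis n j := by
  rw [inducedMul, Finset.sum_eq_single i, Finset.sum_eq_single j] <;> simp_all [stdBasis]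

variable {g}

lemma inducedMul_eq_sum_smul_apply (N : Fin n → Module.End (ZMod 2) (QV n))
    (hN : ∀ i j, g (stdBasis n i + stdBasis n j) + stdBasis n i + stdBasis n j =
      N i (stdBasis n j)) (u v : QV n) :
    inducedMul n g u v = (∑ i, u i • N i) v := by
  simp only [inducedMul, hN, LinearMap.coe_sum, LinearMap.coe_smul, Finset.sum_apply,
    Pi.smul_apply]
  refine Finset.sum_congr rfl fun i _ => ?_
  conv_rhs => rw [← sum_smul_stdBasis v]
  simp only [map_sum, map_smul, Finset.smul_sum, smul_smul]

lemma inducedMul_assoc (N : Fin n → Module.End (ZMod 2) (QV n))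
    (hN : ∀ i j, g (stdBasis n i + stdBasis n j) + stdBasis n i + stdBasis n j =
      N i (stdBasis n j)) (hcomm : ∀ i j, Commute (N i) (N j)) (u v w : QV n) :
    inducedMul n g (inducedMul n g u v) w = inducedMul n g u (inducedMul n g v w) := by
  have hM : Commute (∑ i, w i • N i) (∑ i, u i • N i) :=
    Commute.sum_left _ _ _ fun i _ => Commute.sum_right _ _ _ fun j _ =>
      ((hcomm i j).smul_left _).smul_right _
  rw [inducedMul_comm g _ w, inducedMul_comm g v w, inducedMul_eq_sum_smul_apply N hN,
    inducedMul_eq_sum_smul_apply N hN, inducedMul_eq_sum_smul_apply N hN,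
    inducedMul_eq_sum_smul_apply N hN, ← Module.End.mul_apply, hM.eq, Module.End.mul_apply]

end InducedMul

lemma apply_stdBasis_add_stdBasis_eq_linearPart {n : ℕ} {f : QV n ≃ QV n} (h0 : f 0 = 0)
    (hb : ∀ i, f (stdBasis n i) = stdBasis n i) {i : Fin n}
    (hA : IsAffine (f.permCongr (Equiv.addRight (stdBasis n i)))) (j : Fin n) :
    f (stdBasis n i + stdBasis n j) + stdBasis n i + stdBasis n j =
      hA.linearPart (stdBasis n j) + stdBasis n j := by
  have hb' : f.symm (stdBasis n j) = stdBasis n j := f.symm_apply_eq.mpr (hb j).symm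
  have h0' : f.symm 0 = 0 := f.symm_apply_eq.mpr h0.symm
  simp only [IsAffine.linearPart_apply, Equiv.permCongr_apply, Equiv.coe_addRight, hb', h0',
    zero_add, hb, ZModModule.sub_eq_add, add_comm (stdBasis n j)]

theorem stmt2_general (n : ℕ) (f : QV n ≃ QV n)
    (hf : permGate n f ∈ CliffordLevel n 3) (hst : IsStaircase n ⇑f) :
    IsDescendingMul n (inducedMul n ⇑f) := by
  have hA := isAffine_permCongr_addRight_of_permGate_mem_cliffordLevel_three hf
  let N : Fin n → Module.End (ZMod 2) (QV n) := fun i =>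
    (hA (stdBasis n i)).linearPart.toZModLinearMap 2 + 1
  have hN (i j : Fin n) : f (stdBasis n i + stdBasis n j) + stdBasis n i + stdBasis n j =
      N i (stdBasis n j) :=
    apply_stdBasis_add_stdBasis_eq_linearPart hst.map_zero hst.map_stdBasis (hA _) j
  have hcomm (i j : Fin n) : Commute (N i) (N j) := by
    have hL : Commute ((hA (stdBasis n i)).linearPart.toZModLinearMap 2)
        ((hA (stdBasis n j)).linearPart.toZModLinearMap 2) :=
      LinearMap.ext <| (hA _).linearPart_comm (hA _) fun x => by simp [add_right_comm]
    exact (hL.add_right (.one_right _)).add_left (.one_left _)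
  refine ⟨inducedMul_add_left _, inducedMul_add_right _, inducedMul_assoc N hN hcomm,
    inducedMul_comm _, fun i => ?_, fun i j _ m hm => ?_⟩
  · rw [inducedMul_stdBasis_stdBasis, ZModModule.add_self, hst.map_zero, zero_add,
      ZModModule.add_self]
  · rw [inducedMul_stdBasis_stdBasis, Pi.add_apply, Pi.add_apply,
      hst.apply_stdBasis_add_stdBasis_of_le hm, Pi.add_apply, add_assoc, ZModModule.add_self]

/-- A staircase-form permutation gate in `𝒞₃` induces, via
`eᵢeⱼ := π(eᵢ+eⱼ) + eᵢ + eⱼ` extended bilinearly, a descending multiplication. -/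
theorem stmt2 (n : ℕ) (hn : 1 ≤ n) (f : QV n ≃ QV n)
    (hf : permGate n f ∈ CliffordLevel n 3) (hst : IsStaircase n ⇑f) :
    IsDescendingMul n (inducedMul n ⇑f) :=
  stmt2_general n f hf hst
end

section
/- Given a descending multiplication on 𝔽₂ⁿ, let π be the map defined by π(∑_{i∈S} eᵢ) = ∑_{∅≠T⊆S} ∏_{i∈T} eᵢ for every S ⊆ [n]. Then the operation obtained from π by setting eᵢeⱼ := π(eᵢ+eⱼ) + eᵢ + eⱼ and extending bilinearly coincides with the original descending multiplication. -/
/-!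
Both multiplications are biadditive, so it suffices to compare them on pairs of basis vectors.
For `i ≠ j` the defining property of `π` on `S = {i, j}` reads
`π(eᵢ + eⱼ) = eᵢ + eⱼ + eᵢeⱼ` (the empty product does not contribute), and for `i = j`
both sides vanish since `π(0) = 0` and `eᵢeᵢ = 0`.
-/

lemma stdBasis_eq_single (n : ℕ) (i : Fin n) : stdBasis n i = Pi.single i 1 := by
  funext m
  simp [stdBasis, Pi.single_apply]

lemma sum_sum_smul_apply_stdBasis {n : ℕ} {M : Type*} [AddCommGroup M] [Module (ZMod 2) M]
    (f : QV n → QV n → M) (add_left : ∀ u v w, f (u + v) w = f u w + f v w)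
    (add_right : ∀ u v w, f u (v + w) = f u v + f u w) (u v : QV n) :
    ∑ i, ∑ j, (u i * v j) • f (stdBasis n i) (stdBasis n j) = f u v := by
  let fl (w : QV n) : QV n →+ M := AddMonoidHom.mk' (f · w) (add_left · · w)
  let fr (w : QV n) : QV n →+ M := AddMonoidHom.mk' (f w) (add_right w)
  have expand (x : QV n) : x = ∑ i, x i • stdBasis n i := by
    simpa only [stdBasis_eq_single] using pi_eq_sum_univ' x
  change _ = fl v u
  conv_rhs => rw [expand u]
  rw [map_sum]
  refine Finset.sum_congr rfl fun i _ => ?_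
  rw [ZMod.map_smul]
  change _ = u i • fr (stdBasis n i) v
  conv_rhs => rw [expand v]
  rw [map_sum, Finset.smul_sum]
  refine Finset.sum_congr rfl fun j _ => ?_
  rw [ZMod.map_smul, smul_smul]
  rfl

lemma dmProd_empty {n : ℕ} (mul : QV n → QV n → QV n) : dmProd n mul ∅ = 0 := by
  simp [dmProd, dmProdList]

lemma dmProd_singleton {n : ℕ} (mul : QV n → QV n → QV n) (i : Fin n) :
    dmProd n mul {i} = stdBasis n i := by
  simp [dmProd, dmProdList]

lemma dmProd_pair {n : ℕ} (mul : QV n → QV n → QV n) {i j : Fin n} (hij : i < j) :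
    dmProd n mul {i, j} = mul (stdBasis n i) (stdBasis n j) := by
  rw [dmProd, Finset.sort_insert _ (by simpa using hij.le) (by simpa using hij.ne),
    Finset.sort_singleton, dmProdList, dmProdList]

namespace dmPiSpec

variable {n : ℕ} {mul : QV n → QV n → QV n} {g : QV n → QV n}

lemma apply_sum_stdBasis (hg : dmPiSpec n mul g) (S : Finset (Fin n)) :
    g (∑ i ∈ S, stdBasis n i) = ∑ T ∈ S.powerset, dmProd n mul T := by
  rw [hg, Finset.sum_erase _ (dmProd_empty mul)]

lemma apply_zero (hg : dmPiSpec n mul g) : g 0 = 0 := by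
  simpa [dmProd_empty] using hg.apply_sum_stdBasis ∅

lemma apply_stdBasis_add_stdBasis (hg : dmPiSpec n mul g) {i j : Fin n} (hij : i < j) :
    g (stdBasis n i + stdBasis n j) =
      stdBasis n i + stdBasis n j + mul (stdBasis n i) (stdBasis n j) := by
  have hj : ({j} : Finset (Fin n)).powerset = {∅, {j}} := by
    ext T; simp [Finset.subset_singleton_iff]
  have h := hg.apply_sum_stdBasis {i, j}
  rw [Finset.sum_pair hij.ne] at h
  rw [h, Finset.sum_powerset_insert (by simpa using hij.ne), hj,
    Finset.sum_pair (Finset.singleton_ne_empty j).symm, Finset.sum_pair (by simp),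
    Finset.insert_empty, dmProd_empty, dmProd_singleton, dmProd_singleton, dmProd_pair mul hij]
  abel

lemma apply_add_add_eq_mul (hg : dmPiSpec n mul g) (comm : ∀ u v, mul u v = mul v u)
    (sq : ∀ i, mul (stdBasis n i) (stdBasis n i) = 0) (i j : Fin n) :
    g (stdBasis n i + stdBasis n j) + stdBasis n i + stdBasis n j =
      mul (stdBasis n i) (stdBasis n j) := by
  have add_self (x : QV n) : x + x = 0 := funext fun m => CharTwo.add_self_eq_zero (x m)
  rcases lt_trichotomy i j with hij | rfl | hji
  · rw [hg.apply_stdBasis_add_stdBasis hij]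
    linear_combination add_self (stdBasis n i) + add_self (stdBasis n j)
  · rw [add_self, hg.apply_zero, sq, zero_add, add_self]
  · rw [add_comm (stdBasis n i), hg.apply_stdBasis_add_stdBasis hji, comm (stdBasis n j)]
    linear_combination add_self (stdBasis n i) + add_self (stdBasis n j)

end dmPiSpec

/-- multiplication → permutation → multiplication is the identity. -/
theorem stmt3 (n : ℕ) (mul : QV n → QV n → QV n) (hmul : IsDescendingMul n mul)
    (g : QV n → QV n) (hg : dmPiSpec n mul g) :
    inducedMul n g = mul := by
  obtain ⟨add_left, add_right, -, comm, sq, -⟩ := hmul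
  funext u v
  rw [inducedMul]
  simp only [hg.apply_add_add_eq_mul comm sq]
  exact sum_sum_smul_apply_stdBasis mul add_left add_right u v
end

section
/- Given any descending multiplication on 𝔽₂ⁿ, if there is a subset S ⊆ [n] with |S| = k such that ∏_{i∈S} eᵢ ≠ 0, then n ≥ 2ᵏ − 1. -/
namespace Stmt7Aux

variable {n : ℕ} {mul : QV n → QV n → QV n}

lemma qv_add_self (u : QV n) : u + u = 0 := by
  funext m
  have : ∀ x : ZMod 2, x + x = 0 := by decide
  exact this (u m)

lemma zero_mul' (h : IsDescendingMul n mul) (w : QV n) : mul 0 w = 0 := by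
  have h1 := h.1 0 0 w
  rw [add_zero] at h1
  have := congrArg (· + mul 0 w) h1
  simpa [add_assoc, qv_add_self] using this.symm

lemma dmProdList_perm (h : IsDescendingMul n mul) {l₁ l₂ : List (Fin n)} (hp : l₁.Perm l₂) :
    dmProdList n mul l₁ = dmProdList n mul l₂ := by
  induction hp with
  | nil => rfl
  | cons x p ih =>
    rename_i l₁ l₂
    cases l₁ with
    | nil =>
      have : l₂ = [] := p.symm.eq_nil
      subst this; rfl
    | cons a l =>
      cases l₂ with
      | nil => exact absurd p.eq_nil (by simp)
      | cons b m =>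
        show mul (stdBasis n x) _ = mul (stdBasis n x) _
        rw [show dmProdList n mul (a :: l) = dmProdList n mul (b :: m) from ih]
  | swap x y l =>
    cases l with
    | nil => exact h.2.2.2.1 _ _
    | cons a m =>
      show mul (stdBasis n y) (mul (stdBasis n x) _) = mul (stdBasis n x) (mul (stdBasis n y) _)
      rw [← h.2.2.1, h.2.2.2.1 (stdBasis n y) (stdBasis n x), h.2.2.1]
  | trans _ _ ih1 ih2 => exact ih1.trans ih2

lemma dmProd_singleton (i : Fin n) : dmProd n mul {i} = stdBasis n i := by
  rw [dmProd, Finset.sort_singleton]; rfl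

lemma dmProd_insert (h : IsDescendingMul n mul) {i : Fin n} {T : Finset (Fin n)}
    (hi : i ∉ T) (hT : T.Nonempty) :
    dmProd n mul (insert i T) = mul (stdBasis n i) (dmProd n mul T) := by
  have hperm : ((insert i T).sort (· ≤ ·)).Perm (i :: T.sort (· ≤ ·)) :=
    (Finset.sort_perm_toList _ _).trans
      ((Finset.toList_insert hi).trans ((Finset.sort_perm_toList _ _).symm.cons i))
  rw [dmProd, dmProdList_perm h hperm]
  obtain ⟨a, l, hl⟩ : ∃ a l, T.sort (· ≤ ·) = a :: l := by
    cases hls : T.sort (· ≤ ·) with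
    | nil =>
      exfalso
      have hlen := Finset.length_sort (α := Fin n) (· ≤ ·) (s := T)
      rw [hls] at hlen
      simp at hlen
      have hTe : T = ∅ := Finset.card_eq_zero.mp hlen.symm
      subst hTe
      exact absurd hT (by simp)
    | cons a l => exact ⟨a, l, rfl⟩
  rw [dmProd, hl]
  rfl

lemma dmProd_union (h : IsDescendingMul n mul) {A B : Finset (Fin n)}
    (hd : Disjoint A B) (hA : A.Nonempty) (hB : B.Nonempty) :
    dmProd n mul (A ∪ B) = mul (dmProd n mul A) (dmProd n mul B) := by
  classical
  induction A using Finset.induction with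
  | empty => exact absurd hA (by simp)
  | @insert i A' hi ih =>
    have hdA' : Disjoint A' B := (Finset.disjoint_insert_left.mp hd).2
    have hiB : i ∉ B := (Finset.disjoint_insert_left.mp hd).1
    by_cases hA' : A'.Nonempty
    · have hiAB : i ∉ A' ∪ B := by simp [hi, hiB]
      rw [Finset.insert_union, dmProd_insert h hiAB (hA'.mono Finset.subset_union_left),
        ih hdA' hA', dmProd_insert h hi hA', h.2.2.1]
    · have : A' = ∅ := Finset.not_nonempty_iff_eq_empty.mp hA'
      subst this
      rw [Finset.insert_union, Finset.empty_union] at *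
      rw [dmProd_insert h hiB hB,
        show insert i (∅ : Finset (Fin n)) = {i} from rfl, dmProd_singleton]

lemma kill (h : IsDescendingMul n mul) (i : Fin n) (u v : QV n)
    (hu : u = stdBasis n i ∨ ∃ x, u = mul (stdBasis n i) x)
    (hv : v = stdBasis n i ∨ ∃ y, v = mul (stdBasis n i) y) :
    mul u v = 0 := by
  have e := stdBasis n i
  have hee : mul (stdBasis n i) (stdBasis n i) = 0 := h.2.2.2.2.1 i
  have key : ∀ y, mul (stdBasis n i) (mul (stdBasis n i) y) = 0 := by
    intro y
    rw [← h.2.2.1, hee, zero_mul' h]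
  rcases hu with rfl | ⟨x, rfl⟩ <;> rcases hv with rfl | ⟨y, rfl⟩
  · exact hee
  · exact key y
  · rw [h.2.2.2.1]; exact key x
  · rw [h.2.2.1, h.2.2.2.1 x, h.2.2.1, ← h.2.2.1, hee, zero_mul' h]

lemma dmProd_cases (h : IsDescendingMul n mul) {i : Fin n} {A : Finset (Fin n)} (hiA : i ∈ A) :
    dmProd n mul A = stdBasis n i ∨ ∃ x, dmProd n mul A = mul (stdBasis n i) x := by
  classical
  by_cases hA : A = {i}
  · subst hA; exact Or.inl (dmProd_singleton i)
  · right
    have h1 : A = insert i (A.erase i) := (Finset.insert_erase hiA).symm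
    have h2 : (A.erase i).Nonempty := by
      by_contra hc
      rw [Finset.not_nonempty_iff_eq_empty] at hc
      apply hA
      apply Finset.eq_singleton_iff_unique_mem.mpr
      refine ⟨hiA, fun j hj => ?_⟩
      by_contra hji
      have : j ∈ A.erase i := Finset.mem_erase.mpr ⟨hji, hj⟩
      rw [hc] at this
      simp at this
    refine ⟨dmProd n mul (A.erase i), ?_⟩
    nth_rewrite 1 [h1]
    rw [dmProd_insert h (Finset.notMem_erase i A) h2]

lemma dmProd_mul_eq_zero (h : IsDescendingMul n mul) {i : Fin n} {A B : Finset (Fin n)}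
    (hiA : i ∈ A) (hiB : i ∈ B) :
    mul (dmProd n mul A) (dmProd n mul B) = 0 :=
  kill h i _ _ (dmProd_cases h hiA) (dmProd_cases h hiB)

lemma mul_sum_left (h : IsDescendingMul n mul) {ι : Type*} [DecidableEq ι] (F : Finset ι)
    (f : ι → QV n) (w : QV n) :
    mul (∑ T ∈ F, f T) w = ∑ T ∈ F, mul (f T) w := by
  induction F using Finset.induction with
  | empty => simpa using zero_mul' h w
  | @insert i F hi ih =>
    rw [Finset.sum_insert hi, Finset.sum_insert hi, h.1, ih]

lemma mul_smul_left (h : IsDescendingMul n mul) (c : ZMod 2) (u w : QV n) :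
    mul (c • u) w = c • mul u w := by
  have : c = 0 ∨ c = 1 := by
    have : ∀ c : ZMod 2, c = 0 ∨ c = 1 := by decide
    exact this c
  rcases this with rfl | rfl
  · simpa using zero_mul' h w
  · simp

end Stmt7Aux

open Stmt7Aux

/-- For a descending multiplication, if `∏_{i∈S} eᵢ ≠ 0` for some set `S`
with `|S| = k`, then `n ≥ 2ᵏ − 1`. -/
theorem stmt7 (n : ℕ) (mul : QV n → QV n → QV n) (hmul : IsDescendingMul n mul)
    (k : ℕ) (S : Finset (Fin n)) (hS : S.card = k) (hne : dmProd n mul S ≠ 0) :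
    2 ^ k - 1 ≤ n := by
  classical
  have hSne : S.Nonempty := by
    rcases Finset.eq_empty_or_nonempty S with rfl | h
    · exact absurd (by rw [dmProd, Finset.sort_empty]; rfl) hne
    · exact h
  set ι := {T : Finset (Fin n) // T ∈ S.powerset.erase ∅} with hι
  have hmem : ∀ T : ι, T.1 ⊆ S ∧ T.1.Nonempty := by
    rintro ⟨T, hT⟩
    rw [Finset.mem_erase, Finset.mem_powerset] at hT
    exact ⟨hT.2, Finset.nonempty_iff_ne_empty.mpr hT.1⟩
  have hone : ∀ c : ZMod 2, c ≠ 0 → c = 1 := by decide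
  have hli : LinearIndependent (ZMod 2) (fun T : ι => dmProd n mul T.1) := by
    rw [Fintype.linearIndependent_iff]
    intro g hg
    by_contra hcon
    push_neg at hcon
    set F : Finset ι := Finset.univ.filter (fun T => g T ≠ 0) with hF
    have hFne : F.Nonempty := by
      obtain ⟨T, hT⟩ := hcon
      exact ⟨T, by simp [hF, hT]⟩
    obtain ⟨T0, hT0F, hT0min⟩ := Finset.exists_min_image F (fun T => T.1.card) hFne
    have hgT0 : g T0 ≠ 0 := by simpa [hF] using hT0F
    have hT0S : T0.1 ⊆ S := (hmem T0).1
    have hT0ne : T0.1.Nonempty := (hmem T0).2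
    by_cases hT0eq : T0.1 = S
    · have hsum : ∑ T : ι, g T • dmProd n mul T.1 = g T0 • dmProd n mul T0.1 := by
        refine Finset.sum_eq_single T0 (fun T _ hTne => ?_) (by simp)
        by_cases hgT : g T = 0
        · simp [hgT]
        · exfalso
          have hle := hT0min T (by simp [hF, hgT])
          have hTS : T.1 ⊆ S := (hmem T).1
          have hle' : S.card ≤ T.1.card := by
            have := congrArg Finset.card hT0eq; omega
          have hTeq : T.1 = S := Finset.eq_of_subset_of_card_le hTS hle'
          exact hTne (Subtype.ext (hTeq.trans hT0eq.symm))
      rw [hsum, hone _ hgT0, one_smul, hT0eq] at hg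
      exact hne hg
    · have hCne : (S \ T0.1).Nonempty := by
        rw [Finset.sdiff_nonempty]
        intro hle
        exact hT0eq (Finset.Subset.antisymm hT0S hle)
      set C := S \ T0.1 with hC
      have key : (0 : QV n) = ∑ T : ι, g T • mul (dmProd n mul T.1) (dmProd n mul C) := by
        calc (0 : QV n) = mul (∑ T : ι, g T • dmProd n mul T.1) (dmProd n mul C) := by
              rw [hg, zero_mul' hmul]
          _ = ∑ T : ι, mul (g T • dmProd n mul T.1) (dmProd n mul C) :=
              mul_sum_left hmul _ _ _
          _ = ∑ T : ι, g T • mul (dmProd n mul T.1) (dmProd n mul C) :=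
              Finset.sum_congr rfl fun T _ => mul_smul_left hmul _ _ _
      have hsum : ∑ T : ι, g T • mul (dmProd n mul T.1) (dmProd n mul C)
          = g T0 • mul (dmProd n mul T0.1) (dmProd n mul C) := by
        refine Finset.sum_eq_single T0 (fun T _ hTne => ?_) (by simp)
        by_cases hgT : g T = 0
        · simp [hgT]
        · have hle := hT0min T (by simp [hF, hgT])
          by_cases hsub : T.1 ⊆ T0.1
          · exact absurd (Subtype.ext (Finset.eq_of_subset_of_card_le hsub hle)) hTne
          · obtain ⟨i, hiT, hiT0⟩ := Finset.not_subset.mp hsub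
            have hiC : i ∈ C := Finset.mem_sdiff.mpr ⟨(hmem T).1 hiT, hiT0⟩
            rw [dmProd_mul_eq_zero hmul hiT hiC, smul_zero]
      rw [hsum, ← dmProd_union hmul (Finset.disjoint_sdiff) hT0ne hCne,
        Finset.union_sdiff_of_subset hT0S, hone _ hgT0, one_smul] at key
      exact hne key.symm
  have hcard := hli.fintype_card_le_finrank
  rw [Module.finrank_fintype_fun_eq_card, Fintype.card_fin] at hcard
  have hcι : Fintype.card ι = 2 ^ k - 1 := by
    rw [show Fintype.card ι = (S.powerset.erase ∅).card from Fintype.card_coe _,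
      Finset.card_erase_of_mem (by simp), Finset.card_powerset, hS]
  omega
end

section
/- Given a descending multiplication on 𝔽₂ⁿ, let π be the permutation of 𝔽₂ⁿ defined by π(∑_{i∈S} eᵢ) = ∑_{∅≠T⊆S} ∏_{i∈T} eᵢ for every S ⊆ [n]. Then for every nonempty S ⊆ [n] and every m ∈ [n], the m-th coordinate of the vector ∏_{i∈S} eᵢ equals the coefficient of the monomial ∏_{i∈S} aᵢ in the multilinear polynomial representing the m-th coordinate of π. -/
/-- For a descending multiplication with associated permutation `π`, for
every nonempty `S` and every coordinate `m`, the `m`-th coordinate of `∏_{i∈S} eᵢ`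
equals the coefficient of `∏_{i∈S} aᵢ` in the multilinear polynomial representing the
`m`-th coordinate of `π`. -/
theorem stmt8 (n : ℕ) (mul : QV n → QV n → QV n) (hmul : IsDescendingMul n mul)
    (g : QV n → QV n) (hg : dmPiSpec n mul g)
    (S : Finset (Fin n)) (hS : S.Nonempty) (m : Fin n) :
    dmProd n mul S m = mlCoeff n (fun v => g v m) S := by
  unfold mlCoeff
  have h1 : ∀ R ∈ S.powerset, (g (∑ i ∈ R, stdBasis n i)) m
      = ∑ T ∈ R.powerset.erase ∅, dmProd n mul T m := by
    intro R _
    rw [hg R, Finset.sum_apply]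
  rw [Finset.sum_congr rfl h1]
  rw [Finset.sum_comm' (t' := S.powerset.erase ∅) (s' := fun T => Finset.Icc T S)
    (by
      intro R T
      simp only [Finset.mem_powerset, Finset.mem_erase, Finset.mem_Icc]
      constructor
      · rintro ⟨h1, h2, h3⟩; exact ⟨⟨h3, h1⟩, h2, h3.trans h1⟩
      · rintro ⟨⟨h1, h2⟩, h3, h4⟩; exact ⟨h2, h3, h1⟩)]
  have h2 : ∀ T ∈ S.powerset.erase ∅,
      (∑ _R ∈ Finset.Icc T S, dmProd n mul T m)
        = if T = S then dmProd n mul T m else 0 := by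
    intro T hT
    simp only [Finset.mem_erase, Finset.mem_powerset] at hT
    rw [Finset.sum_const, Finset.card_Icc_finset hT.2]
    rcases eq_or_ne T S with h | h
    · subst h; simp
    · have : S.card - T.card ≠ 0 := by
        have := Finset.card_lt_card (lt_of_le_of_ne hT.2 h)
        omega
      rw [if_neg h]
      obtain ⟨k, hk⟩ := Nat.exists_eq_succ_of_ne_zero this
      rw [hk, pow_succ, nsmul_eq_mul]
      push_cast
      ring_nf
      simp
      exact Or.inr (by decide)
  rw [Finset.sum_congr rfl h2, Finset.sum_ite_eq' _ S]
  rw [if_pos (by simp [Finset.mem_erase, hS.ne_empty])]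
end

section
/- For each integer k ≥ 3, write the polynomial representations of U_k and U_k⁻¹ as (π_S) and (π'_S) over nonempty subsets S ⊆ [k], in variables a_T indexed by nonempty subsets T ⊆ [k]. Then π_S(a) = ∑_{m=1}^{|S|} ∑ a_{T₁}a_{T₂}⋯a_{T_m}, where the inner sum ranges over all partitions of S into m unordered nonempty parts T₁,…,T_m; and π'_S(a) = a_S + ∑ a_{T₁}a_{T₂}, where the sum ranges over unordered pairs of nonempty sets T₁, T₂ with T₁ ⊔ T₂ = S. -/
/-- `M` encodes a partition of the nonempty subset of `[k]` encoded by `s`: the parts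
(encoded by the elements of `M`, via binary digits of `a+1`) are pairwise disjoint and
their union is the subset encoded by `s`. -/
def ukPartition (k : ℕ) (M : Finset (Fin (2 ^ k - 1))) (s : Fin (2 ^ k - 1)) : Prop :=
  (∀ a ∈ M, ∀ b ∈ M, a ≠ b → (a.val + 1) &&& (b.val + 1) = 0) ∧
  (∑ a ∈ M, (a.val + 1)) = s.val + 1

/-! Write `a + 1` for the bit mask of the subset of `[k]` encoded by the index `a`. Sums of
pairwise bit-disjoint masks are their bitwise unions, so the product `∏_{c ∈ T} e_c` under
`ukMul` is `e_s` exactly when `T` is a partition of `s`, and coordinate `s` of `U_k` is the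
multilinear polynomial `∑_{M partition of s} a^M`. Substituting this into
`a_s + ∑_{a ⊔ b = s} a_a a_b`, a monomial `a^R` with `R` a partition of `s` arises once from
`a_s` and once for each way of cutting `R` into two nonempty blocks: `2^(|R|-1)` times in all,
which is odd only for `R = {s}`. So the latter map is a left inverse of `U_k`, and on the finite
set `𝔽₂ⁿ` therefore its inverse. -/

open Finset

theorem Nat.add_eq_or_of_and_eq_zero {x y : ℕ} (h : x &&& y = 0) : x + y = x ||| y := by
  -- transferred from `BitVec`, at a width where neither side wraps around
  have hxy : x + y < 2 ^ (x + y) := Nat.lt_two_pow_self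
  have hx : x < 2 ^ (x + y) := by omega
  have hy : y < 2 ^ (x + y) := by omega
  have hbv := BitVec.add_eq_or_of_and_eq_zero (BitVec.ofNat (x + y) x) (BitVec.ofNat (x + y) y)
    (by apply BitVec.eq_of_toNat_eq; simp [Nat.mod_eq_of_lt hx, Nat.mod_eq_of_lt hy, h])
  simpa [Nat.mod_eq_of_lt hx, Nat.mod_eq_of_lt hy, Nat.mod_eq_of_lt hxy] using
    congrArg BitVec.toNat hbv

theorem List.sum_map_and_eq_zero_iff {ι : Type*} {g : ι → ℕ} {l : List ι}
    (hl : l.Pairwise fun a b => g a &&& g b = 0) (y : ℕ) :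
    (l.map g).sum &&& y = 0 ↔ ∀ a ∈ l, g a &&& y = 0 := by
  induction l generalizing y with
  | nil => simp
  | cons a l ih =>
    obtain ⟨ha, hl⟩ := List.pairwise_cons.mp hl
    have hdisj : g a &&& (l.map g).sum = 0 := by
      rw [Nat.and_comm]
      exact (ih hl (g a)).2 fun b hb => by rw [Nat.and_comm]; exact ha b hb
    rw [List.map_cons, List.sum_cons, Nat.add_eq_or_of_and_eq_zero hdisj,
      Nat.and_or_distrib_right, Nat.or_eq_zero_iff, ih hl, List.forall_mem_cons]

theorem Finset.sum_and_eq_zero_iff {ι : Type*} {g : ι → ℕ} {M : Finset ι}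
    (hM : (M : Set ι).Pairwise fun a b => g a &&& g b = 0) (y : ℕ) :
    (∑ a ∈ M, g a) &&& y = 0 ↔ ∀ a ∈ M, g a &&& y = 0 := by
  have : Std.Symm fun a b => g a &&& g b = 0 := ⟨fun a b h => by rwa [Nat.and_comm]⟩
  rw [← sum_map_toList,
    List.sum_map_and_eq_zero_iff (M.nodup_toList.pairwise_coe.mp (by simpa using hM))]
  simp

theorem Finset.two_mul_card_filter_sum_lt_sum_sdiff {α : Type*} [DecidableEq α] (w : α → ℕ)
    (R : Finset α) (hw : ∀ P ⊆ R, ∑ a ∈ P, w a ≠ ∑ a ∈ R \ P, w a) :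
    2 * #(R.powerset.filter fun P => ∑ a ∈ P, w a < ∑ a ∈ R \ P, w a) = 2 ^ #R := by
  have hcompl : #(R.powerset.filter fun P => ∑ a ∈ P, w a < ∑ a ∈ R \ P, w a) =
      #(R.powerset.filter fun P => ¬ ∑ a ∈ P, w a < ∑ a ∈ R \ P, w a) := by
    refine card_nbij' (R \ ·) (R \ ·) ?_ ?_ ?_ ?_ <;> intro P hP <;>
      simp only [mem_coe, mem_filter, mem_powerset] at hP ⊢
    · rw [sdiff_sdiff_eq_self hP.1]
      exact ⟨sdiff_subset, hP.2.asymm⟩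
    · rw [sdiff_sdiff_eq_self hP.1]
      exact ⟨sdiff_subset, lt_of_le_of_ne (not_lt.mp hP.2) (hw P hP.1).symm⟩
    · exact sdiff_sdiff_eq_self hP.1
    · exact sdiff_sdiff_eq_self hP.1
  rw [two_mul]
  nth_rw 2 [hcompl]
  rw [card_filter_add_card_filter_not, card_powerset]

theorem Finset.sum_filter_card_eq_two {α β : Type*} [LinearOrder α] [Fintype α]
    [AddCommMonoid β] (𝓜 : Finset (Finset α)) (g : Finset α → β) :
    ∑ M ∈ 𝓜.filter (#· = 2), g M =
      ∑ p ∈ univ.filter (fun p : α × α => p.1 < p.2 ∧ {p.1, p.2} ∈ 𝓜),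
        g {p.1, p.2} := by
  symm
  refine sum_nbij (fun p => {p.1, p.2}) ?_ ?_ ?_ fun _ _ => rfl
  · rintro ⟨a, b⟩ hp
    simp only [mem_filter, mem_univ, true_and] at hp ⊢
    exact ⟨hp.2, card_pair hp.1.ne⟩
  · rintro ⟨a, b⟩ hp ⟨c, d⟩ hq h
    simp only [coe_filter, mem_univ, true_and, Set.mem_ofPred_eq] at hp hq
    have h' : ({a, b} : Set α) = {c, d} := by simpa using congrArg (↑· : Finset α → Set α) h
    rcases Set.pair_eq_pair_iff.mp h' with ⟨rfl, rfl⟩ | ⟨rfl, rfl⟩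
    · rfl
    · exact absurd (hp.1.trans hq.1) (lt_irrefl _)
  · intro M hM
    simp only [coe_filter, Set.mem_ofPred_eq] at hM
    obtain ⟨a, b, hab, rfl⟩ := card_eq_two.mp hM.2
    rcases hab.lt_or_gt with h | h
    · exact ⟨(a, b), by simpa using ⟨h, hM.1⟩, rfl⟩
    · exact ⟨(b, a), by simpa [pair_comm b a] using ⟨h, hM.1⟩, pair_comm b a⟩

section MultilinearPolynomial

variable {N : ℕ}

def mlPoly (𝓜 : Finset (Finset (Fin N))) (v : QV N) : ZMod 2 :=
  ∑ M ∈ 𝓜, ∏ a ∈ M, v a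

theorem mlPoly_sum_stdBasis (𝓜 : Finset (Finset (Fin N))) (S : Finset (Fin N)) :
    mlPoly 𝓜 (∑ i ∈ S, stdBasis N i) = ∑ M ∈ 𝓜, if M ⊆ S then 1 else 0 := by
  refine sum_congr rfl fun M _ => ?_
  simp [stdBasis, prod_ite_zero, subset_iff]

theorem sum_powerset_ite_subset (M T : Finset (Fin N)) :
    (∑ R ∈ T.powerset, if M ⊆ R then (1 : ZMod 2) else 0) = if M = T then 1 else 0 := by
  have hIcc : T.powerset.filter (M ⊆ ·) = Icc M T := by
    ext R
    simp [and_comm]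
  rw [sum_boole, hIcc]
  by_cases hMT : M ⊆ T
  · rw [card_Icc_finset hMT, Nat.cast_pow, show ((2 : ℕ) : ZMod 2) = 0 from rfl, zero_pow_eq]
    congr 1
    exact propext ⟨fun h => eq_of_subset_of_card_le hMT (by omega), fun h => by simp [h]⟩
  · rw [Icc_eq_empty hMT, if_neg (by rintro rfl; exact hMT subset_rfl)]
    simp

theorem mlCoeff_mlPoly (𝓜 : Finset (Finset (Fin N))) (T : Finset (Fin N)) :
    mlCoeff N (mlPoly 𝓜) T = if T ∈ 𝓜 then 1 else 0 := by
  simp only [mlCoeff, mlPoly_sum_stdBasis]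
  rw [sum_comm]
  simp only [sum_powerset_ite_subset, sum_ite_eq']

end MultilinearPolynomial

section Partitions

variable {k : ℕ} {s a b : Fin (2 ^ k - 1)} {M P Q R : Finset (Fin (2 ^ k - 1))}

instance (k : ℕ) (M : Finset (Fin (2 ^ k - 1))) (s : Fin (2 ^ k - 1)) :
    Decidable (ukPartition k M s) := by
  unfold ukPartition; infer_instance

def ukPartitions (k : ℕ) (s : Fin (2 ^ k - 1)) : Finset (Finset (Fin (2 ^ k - 1))) :=
  univ.filter (ukPartition k · s)

def ukPairPartitions (k : ℕ) (s : Fin (2 ^ k - 1)) : Finset (Finset (Fin (2 ^ k - 1))) :=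
  (ukPartitions k s).filter (#· = 2)

@[simp]
theorem mem_ukPartitions : M ∈ ukPartitions k s ↔ ukPartition k M s := by
  simp [ukPartitions]

theorem ukPartition.nonempty (h : ukPartition k M s) : M.Nonempty := by
  rw [nonempty_iff_ne_empty]
  rintro rfl
  simpa using h.2

theorem ukPartition_singleton_iff : ukPartition k {a} s ↔ a = s := by
  refine ⟨fun h => Fin.ext (by simpa using h.2), ?_⟩
  rintro rfl
  exact ⟨fun c hc d hd hcd => absurd ((mem_singleton.mp hc).trans (mem_singleton.mp hd).symm) hcd,
    by simp⟩

theorem filter_ukPartitions_card_eq_one (s : Fin (2 ^ k - 1)) :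
    (ukPartitions k s).filter (#· = 1) = {{s}} := by
  ext M
  simp only [mem_filter, mem_ukPartitions, mem_singleton, card_eq_one]
  constructor
  · rintro ⟨hM, a, rfl⟩
    rw [ukPartition_singleton_iff.mp hM]
  · rintro rfl
    exact ⟨ukPartition_singleton_iff.mpr rfl, s, rfl⟩

theorem ukPartition.and_sum_sdiff (hR : ukPartition k R s) (hPR : P ⊆ R) :
    (∑ c ∈ P, (c.val + 1)) &&& ∑ c ∈ R \ P, (c.val + 1) = 0 := by
  have hsub : ∀ T ⊆ R, (T : Set _).Pairwise fun c d : Fin (2 ^ k - 1) =>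
      (c.val + 1) &&& (d.val + 1) = 0 :=
    fun T hT c hc d hd hcd => hR.1 c (hT hc) d (hT hd) hcd
  rw [sum_and_eq_zero_iff (hsub P hPR)]
  intro c hc
  rw [Nat.and_comm, sum_and_eq_zero_iff (hsub _ sdiff_subset)]
  intro d hd
  exact hR.1 d (mem_sdiff.mp hd).1 c (hPR hc) (by rintro rfl; exact (mem_sdiff.mp hd).2 hc)

theorem ukPartition.and_eq_zero_of_mem (hab : (a.val + 1) &&& (b.val + 1) = 0)
    (hP : ukPartition k P a) (hQ : ukPartition k Q b) :
    ∀ c ∈ P, ∀ d ∈ Q, (c.val + 1) &&& (d.val + 1) = 0 := by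
  rw [← hP.2, ← hQ.2, sum_and_eq_zero_iff hP.1] at hab
  intro c hc d hd
  have hc := hab c hc
  rw [Nat.and_comm, sum_and_eq_zero_iff hQ.1] at hc
  rw [Nat.and_comm]
  exact hc d hd

theorem ukPartition.disjoint (hab : (a.val + 1) &&& (b.val + 1) = 0) (hP : ukPartition k P a)
    (hQ : ukPartition k Q b) : Disjoint P Q :=
  disjoint_left.mpr fun c hcP hcQ => by
    simpa using ukPartition.and_eq_zero_of_mem hab hP hQ c hcP c hcQ

theorem ukPartition.union (hab : (a.val + 1) &&& (b.val + 1) = 0)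
    (hs : (a.val + 1) + (b.val + 1) = s.val + 1) (hP : ukPartition k P a)
    (hQ : ukPartition k Q b) : ukPartition k (P ∪ Q) s := by
  have hcross := ukPartition.and_eq_zero_of_mem hab hP hQ
  refine ⟨fun c hc d hd hcd => ?_, by rw [sum_union (hP.disjoint hab hQ), hP.2, hQ.2, hs]⟩
  rcases mem_union.mp hc with hc | hc <;> rcases mem_union.mp hd with hd | hd
  · exact hP.1 c hc d hd hcd
  · exact hcross c hc d hd
  · rw [Nat.and_comm]; exact hcross d hd c hc
  · exact hQ.1 c hc d hd hcd

theorem ukPartition_pair_iff (hab : a ≠ b) :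
    ukPartition k {a, b} s ↔
      (a.val + 1) &&& (b.val + 1) = 0 ∧ (a.val + 1) + (b.val + 1) = s.val + 1 := by
  refine ⟨fun h => ⟨h.1 a (by simp) b (by simp) hab, by simpa [sum_pair hab] using h.2⟩, ?_⟩
  rintro ⟨hD, hs⟩
  rw [insert_eq]
  exact ukPartition.union hD hs (ukPartition_singleton_iff.mpr rfl)
    (ukPartition_singleton_iff.mpr rfl)

theorem ukPartition.disjoint_of_pair (hP : ukPartition k P a) (hab : a ≠ b)
    (hs : ukPartition k {a, b} s) (hQ : ukPartition k Q b) : Disjoint P Q :=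
  hP.disjoint ((ukPartition_pair_iff hab).mp hs).1 hQ

theorem ukPartition.unique (ha : ukPartition k M a) (hb : ukPartition k M b) : a = b :=
  Fin.ext (by have := ha.2; have := hb.2; omega)

theorem ukPartition.exists_of_subset (hR : ukPartition k R s) (hPR : P ⊆ R) (hP : P.Nonempty) :
    ∃ a, ukPartition k P a := by
  have hpos : 0 < ∑ c ∈ P, (c.val + 1) := sum_pos (fun _ _ => Nat.succ_pos _) hP
  have hle : ∑ c ∈ P, (c.val + 1) ≤ s.val + 1 := hR.2 ▸ sum_le_sum_of_subset hPR
  exact ⟨⟨∑ c ∈ P, (c.val + 1) - 1, by omega⟩,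
    fun c hc d hd => hR.1 c (hPR hc) d (hPR hd), (Nat.sub_add_cancel hpos).symm⟩

end Partitions

section UkProduct

variable {k : ℕ}

theorem ukBasisMul_apply (a b s : Fin (2 ^ k - 1)) :
    ukBasisMul k a b s =
      if (a.val + 1) &&& (b.val + 1) = 0 ∧ (a.val + 1) + (b.val + 1) = s.val + 1 then 1
      else 0 := by
  unfold ukBasisMul
  by_cases hab : (a.val + 1) &&& (b.val + 1) = 0
  · by_cases hlt : a.val + b.val + 1 < 2 ^ k - 1
    · simp only [hab, dif_pos hlt, stdBasis, Fin.ext_iff, true_and, if_true]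
      congr 1
      exact propext ⟨fun h => by omega, fun h => by omega⟩
    · simp only [hab, dif_neg hlt, true_and, if_true, Pi.zero_apply]
      rw [if_neg (by have := s.isLt; omega)]
  · simp [hab]

theorem ukMul_stdBasis_apply (i s : Fin (2 ^ k - 1)) (w : QV (2 ^ k - 1)) :
    ukMul k (stdBasis _ i) w s = ∑ b, w b * ukBasisMul k i b s := by
  simp [ukMul, stdBasis, Finset.sum_apply, ite_mul, ite_apply]

theorem dmProdList_ukMul_apply : ∀ (l : List (Fin (2 ^ k - 1))) (s : Fin (2 ^ k - 1)),
    dmProdList _ (ukMul k) l s =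
      if l.Pairwise (fun a b => (a.val + 1) &&& (b.val + 1) = 0) ∧
        (l.map (·.val + 1)).sum = s.val + 1 then 1 else 0
  | [], s => by simp [dmProdList]
  | [i], s => by simp [dmProdList, stdBasis, Fin.ext_iff, eq_comm]
  | i :: j :: r, s => by
    rw [dmProdList, ukMul_stdBasis_apply]
    simp_rw [dmProdList_ukMul_apply (j :: r), ukBasisMul_apply, ite_zero_mul_ite_zero, mul_one]
    have hpos : 0 < ((j :: r).map (·.val + 1)).sum := by simp
    generalize j :: r = l at *
    simp only [List.pairwise_cons, List.map_cons, List.sum_cons]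
    by_cases hl : l.Pairwise fun a b => (a.val + 1) &&& (b.val + 1) = 0
    swap
    · simp [hl]
    have hdisj : (i.val + 1) &&& (l.map (·.val + 1)).sum = 0 ↔
        ∀ c ∈ l, (i.val + 1) &&& (c.val + 1) = 0 := by
      simpa only [Nat.and_comm (i.val + 1)] using List.sum_map_and_eq_zero_iff hl (i.val + 1)
    by_cases hs : (i.val + 1) &&& (l.map (·.val + 1)).sum = 0 ∧
        i.val + 1 + (l.map (·.val + 1)).sum = s.val + 1
    · rw [if_pos ⟨⟨hdisj.mp hs.1, hl⟩, hs.2⟩]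
      have hb : (l.map (·.val + 1)).sum - 1 < 2 ^ k - 1 := by have := s.isLt; omega
      rw [sum_eq_single_of_mem ⟨_, hb⟩ (mem_univ _)]
      · rw [if_pos]
        simp only [Nat.sub_add_cancel hpos]
        exact ⟨⟨hl, trivial⟩, hs⟩
      · intro b _ hb
        rw [if_neg]
        rintro ⟨⟨-, hsum⟩, -⟩
        exact hb (Fin.ext (by simp only; omega))
    · rw [if_neg (by tauto)]
      refine sum_eq_zero fun b _ => if_neg ?_
      rintro ⟨⟨-, hsum⟩, hib, hbs⟩
      exact hs ⟨hsum ▸ hib, hsum ▸ hbs⟩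

theorem dmProd_ukMul_apply (T : Finset (Fin (2 ^ k - 1))) (s : Fin (2 ^ k - 1)) :
    dmProd _ (ukMul k) T s = if ukPartition k T s then 1 else 0 := by
  have : Std.Symm fun a b : Fin (2 ^ k - 1) => (a.val + 1) &&& (b.val + 1) = 0 :=
    ⟨fun a b h => by rwa [Nat.and_comm]⟩
  rw [dmProd, dmProdList_ukMul_apply]
  refine if_congr (and_congr ?_ ?_) rfl rfl
  · rw [← (sort_nodup T _).pairwise_coe]
    simp only [mem_sort, setOfPred_mem]
    rfl
  · rw [((sort_perm_toList T _).map _).sum_eq, sum_map_toList]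

end UkProduct

section UkMaps

variable {k : ℕ} {s a b : Fin (2 ^ k - 1)} {P Q R : Finset (Fin (2 ^ k - 1))}

def ukFwd (k : ℕ) (v : QV (2 ^ k - 1)) : QV (2 ^ k - 1) :=
  fun s => mlPoly (ukPartitions k s) v

def ukInv (k : ℕ) (v : QV (2 ^ k - 1)) : QV (2 ^ k - 1) :=
  fun s => mlPoly (insert {s} (ukPairPartitions k s)) v

-- Choosing the lighter block orients the unordered splits `{P, R \ P}` of a partition `R`;
-- the two blocks have disjoint masks, so their weights never tie.
def ukLightSubsets (R : Finset (Fin (2 ^ k - 1))) : Finset (Finset (Fin (2 ^ k - 1))) :=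
  R.powerset.filter fun P => ∑ c ∈ P, (c.val + 1) < ∑ c ∈ R \ P, (c.val + 1)

theorem ukFwd_dmPiSpec (k : ℕ) : dmPiSpec (2 ^ k - 1) (ukMul k) (ukFwd k) := by
  intro S
  funext s
  simp only [ukFwd, mlPoly_sum_stdBasis, Finset.sum_apply, dmProd_ukMul_apply, sum_boole]
  congr 2
  ext M
  simp only [mem_filter, mem_ukPartitions, mem_erase, mem_powerset]
  exact ⟨fun h => ⟨⟨h.1.nonempty.ne_empty, h.2⟩, h.1⟩, fun h => ⟨h.2, h.1.2⟩⟩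

theorem ukInv_apply (v : QV (2 ^ k - 1)) (s : Fin (2 ^ k - 1)) :
    ukInv k v s = v s + ∑ M ∈ ukPairPartitions k s, ∏ c ∈ M, v c := by
  rw [ukInv, mlPoly, sum_insert (by simp [ukPairPartitions]), prod_singleton]

theorem ukFwd_mul_ukFwd (v : QV (2 ^ k - 1)) (hab : (a.val + 1) &&& (b.val + 1) = 0) :
    ukFwd k v a * ukFwd k v b =
      ∑ x ∈ ukPartitions k a ×ˢ ukPartitions k b, ∏ c ∈ x.1 ∪ x.2, v c := by
  rw [ukFwd, ukFwd, mlPoly, mlPoly, sum_mul_sum, sum_product]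
  refine sum_congr rfl fun P hP => sum_congr rfl fun Q hQ => (prod_union ?_).symm
  exact (mem_ukPartitions.mp hP).disjoint hab (mem_ukPartitions.mp hQ)

theorem ukPartition.card_ukLightSubsets (hR : ukPartition k R s) :
    (#(ukLightSubsets R) : ZMod 2) = if #R = 1 then 1 else 0 := by
  have htwice := two_mul_card_filter_sum_lt_sum_sdiff (·.val + 1) R fun P hP h => by
    have hzero := hR.and_sum_sdiff hP
    have hsum : ∑ c ∈ R \ P, (c.val + 1) + ∑ c ∈ P, (c.val + 1) = s.val + 1 := by
      rw [sum_sdiff hP, hR.2]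
    rw [h, Nat.and_self] at hzero
    omega
  have hR1 : 1 ≤ #R := card_pos.mpr hR.nonempty
  have hpow : 2 ^ #R = 2 * 2 ^ (#R - 1) := by
    rw [← pow_succ']
    congr 1
    omega
  rw [ukLightSubsets, Nat.eq_of_mul_eq_mul_left two_pos (htwice.trans hpow), Nat.cast_pow,
    show ((2 : ℕ) : ZMod 2) = 0 from rfl, zero_pow_eq]
  congr 1
  exact propext (by omega)

theorem ukPartition.union_mem_ukLightSubsets (hab : a < b) (hs : ukPartition k {a, b} s)
    (hP : ukPartition k P a) (hQ : ukPartition k Q b) :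
    ukPartition k (P ∪ Q) s ∧ P ∈ (ukLightSubsets (P ∪ Q)).erase ∅ := by
  obtain ⟨hD, hsum⟩ := (ukPartition_pair_iff hab.ne).mp hs
  simp only [mem_erase, ukLightSubsets, mem_filter, mem_powerset]
  refine ⟨hP.union hD hsum hQ, hP.nonempty.ne_empty, subset_union_left, ?_⟩
  rw [union_sdiff_cancel_left (hP.disjoint hD hQ), hP.2, hQ.2]
  exact Nat.succ_lt_succ hab

theorem ukPartition.exists_of_mem_ukLightSubsets (hR : ukPartition k R s)
    (hP : P ∈ (ukLightSubsets R).erase ∅) :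
    ∃ a b Q, (a < b ∧ ukPartition k {a, b} s) ∧ ukPartition k P a ∧ ukPartition k Q b ∧
      P ∪ Q = R := by
  simp only [mem_erase, ukLightSubsets, mem_filter, mem_powerset] at hP
  obtain ⟨hP0, hPR, hlt⟩ := hP
  obtain ⟨a, hPa⟩ := hR.exists_of_subset hPR (nonempty_iff_ne_empty.mpr hP0)
  obtain ⟨b, hQb⟩ := hR.exists_of_subset sdiff_subset
    (nonempty_of_sum_ne_zero ((Nat.zero_le _).trans_lt hlt).ne')
  have hab : a < b := by
    rw [Fin.lt_def]
    have := hPa.2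
    have := hQb.2
    omega
  refine ⟨a, b, R \ P, ⟨hab, (ukPartition_pair_iff hab.ne).mpr ⟨?_, ?_⟩⟩, hPa, hQb,
    union_sdiff_of_subset hPR⟩
  · rw [← hPa.2, ← hQb.2]
    exact hR.and_sum_sdiff hPR
  · rw [← hPa.2, ← hQb.2, add_comm, sum_sdiff hPR, hR.2]

theorem sum_ukPairPartitions_prod_ukFwd (v : QV (2 ^ k - 1)) (s : Fin (2 ^ k - 1)) :
    ∑ M ∈ ukPairPartitions k s, ∏ c ∈ M, ukFwd k v c =
      ∑ R ∈ ukPartitions k s, ∑ _P ∈ (ukLightSubsets R).erase ∅, ∏ c ∈ R, v c := by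
  rw [ukPairPartitions, sum_filter_card_eq_two]
  have hprod : ∀ p ∈ univ.filter (fun p : Fin (2 ^ k - 1) × Fin (2 ^ k - 1) =>
      p.1 < p.2 ∧ {p.1, p.2} ∈ ukPartitions k s),
      ∏ c ∈ {p.1, p.2}, ukFwd k v c =
        ∑ x ∈ ukPartitions k p.1 ×ˢ ukPartitions k p.2, ∏ c ∈ x.1 ∪ x.2, v c := by
    rintro ⟨a, b⟩ hp
    simp only [mem_filter, mem_univ, true_and, mem_ukPartitions] at hp
    rw [prod_pair hp.1.ne, ukFwd_mul_ukFwd v ((ukPartition_pair_iff hp.1.ne).mp hp.2).1]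
  rw [sum_congr rfl hprod, sum_sigma', sum_sigma']
  -- `(a, b, P, Q) ↦ (P ∪ Q, P)`, where `a < b` makes `P` the lighter block
  refine sum_nbij (fun x => ⟨x.2.1 ∪ x.2.2, x.2.1⟩) ?_ ?_ ?_ fun _ _ => rfl
  all_goals simp only [coe_sigma, Set.InjOn, Set.SurjOn, Set.subset_def,
    Set.mem_sigma_iff, Set.mem_image, mem_coe, mem_sigma, mem_filter, mem_univ, true_and,
    mem_ukPartitions, mem_product, Sigma.forall, Prod.forall, Sigma.exists, Prod.exists]
  · intro a b P Q hx
    exact ukPartition.union_mem_ukLightSubsets hx.1.1 hx.1.2 hx.2.1 hx.2.2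
  · intro a b P Q hx a' b' P' Q' hx' h
    simp only [Sigma.mk.injEq, heq_eq_eq] at h
    obtain ⟨hU, rfl⟩ := h
    obtain rfl : Q = Q' := by
      rw [← union_sdiff_cancel_left (hx.2.1.disjoint_of_pair hx.1.1.ne hx.1.2 hx.2.2), hU,
        union_sdiff_cancel_left (hx'.2.1.disjoint_of_pair hx'.1.1.ne hx'.1.2 hx'.2.2)]
    obtain rfl := hx.2.1.unique hx'.2.1
    obtain rfl := hx.2.2.unique hx'.2.2
    rfl
  · intro R P hy
    obtain ⟨a, b, Q, hx, hPa, hQb, rfl⟩ := hy.1.exists_of_mem_ukLightSubsets hy.2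
    exact ⟨a, b, P, Q, ⟨hx, hPa, hQb⟩, rfl⟩

theorem ukInv_ukFwd : Function.LeftInverse (ukInv k) (ukFwd k) := by
  intro v
  funext s
  calc ukInv k (ukFwd k v) s
      = ukFwd k v s + ∑ M ∈ ukPairPartitions k s, ∏ c ∈ M, ukFwd k v c := ukInv_apply _ _
    _ = ∑ R ∈ ukPartitions k s, ∑ _P ∈ ukLightSubsets R, ∏ c ∈ R, v c := by
      rw [sum_ukPairPartitions_prod_ukFwd, ukFwd, mlPoly, ← sum_add_distrib]
      refine sum_congr rfl fun R hR => add_sum_erase _ (fun _ => ∏ c ∈ R, v c) ?_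
      have := (mem_ukPartitions.mp hR).2
      simp only [ukLightSubsets, mem_filter, mem_powerset, empty_subset, sum_empty, sdiff_empty,
        true_and]
      omega
    _ = ∑ R ∈ ukPartitions k s, if #R = 1 then ∏ c ∈ R, v c else 0 := by
      refine sum_congr rfl fun R hR => ?_
      rw [sum_const, nsmul_eq_mul, (mem_ukPartitions.mp hR).card_ukLightSubsets, ite_mul,
        one_mul, zero_mul]
    _ = v s := by
      rw [← sum_filter, filter_ukPartitions_card_eq_one, sum_singleton, prod_singleton]

def ukEquiv (k : ℕ) : QV (2 ^ k - 1) ≃ QV (2 ^ k - 1) where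
  toFun := ukFwd k
  invFun := ukInv k
  left_inv := ukInv_ukFwd
  right_inv := ukInv_ukFwd.rightInverse_of_surjective
    (Finite.injective_iff_surjective.mp ukInv_ukFwd.injective)

end UkMaps

theorem stmt9_general (k : ℕ) :
    ∃ f : QV (2 ^ k - 1) ≃ QV (2 ^ k - 1),
      dmPiSpec (2 ^ k - 1) (ukMul k) ⇑f ∧
      (∀ (s : Fin (2 ^ k - 1)) (M : Finset (Fin (2 ^ k - 1))),
        mlCoeff (2 ^ k - 1) (fun v => f v s) M = 1 ↔ ukPartition k M s) ∧
      (∀ (s : Fin (2 ^ k - 1)) (M : Finset (Fin (2 ^ k - 1))),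
        mlCoeff (2 ^ k - 1) (fun v => f.symm v s) M = 1 ↔
          (M = {s} ∨ (M.card = 2 ∧ ukPartition k M s))) := by
  refine ⟨ukEquiv k, ukFwd_dmPiSpec k, fun s M => ?_, fun s M => ?_⟩
  · change mlCoeff _ (mlPoly (ukPartitions k s)) M = 1 ↔ _
    simp only [mlCoeff_mlPoly, mem_ukPartitions, ite_eq_left_iff, zero_ne_one, imp_false,
      not_not]
  · change mlCoeff _ (mlPoly (insert {s} (ukPairPartitions k s))) M = 1 ↔ _
    simp only [mlCoeff_mlPoly, ukPairPartitions, mem_insert, mem_filter, mem_ukPartitions,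
      ite_eq_left_iff, zero_ne_one, imp_false, not_not, and_comm]

/-- the polynomial representations of `U_k` and `U_k⁻¹`. The coordinate
`π_S` of `U_k` is the sum of `a_{T₁}⋯a_{T_m}` over all partitions of `S` into nonempty
parts, i.e. its multilinear coefficient at a monomial `M` is `1` iff `M` is a partition
of `S`; the coordinate `π'_S` of `U_k⁻¹` is `a_S + ∑_{T₁⊔T₂=S} a_{T₁}a_{T₂}`, i.e. its
coefficient at `M` is `1` iff `M = {S}` or `M` is a two-part partition of `S`. -/
theorem stmt9 (k : ℕ) (hk : 3 ≤ k) :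
    ∃ f : QV (2 ^ k - 1) ≃ QV (2 ^ k - 1),
      dmPiSpec (2 ^ k - 1) (ukMul k) ⇑f ∧
      (∀ (s : Fin (2 ^ k - 1)) (M : Finset (Fin (2 ^ k - 1))),
        mlCoeff (2 ^ k - 1) (fun v => f v s) M = 1 ↔ ukPartition k M s) ∧
      (∀ (s : Fin (2 ^ k - 1)) (M : Finset (Fin (2 ^ k - 1))),
        mlCoeff (2 ^ k - 1) (fun v => f.symm v s) M = 1 ↔
          (M = {s} ∨ (M.card = 2 ∧ ukPartition k M s))) :=
  stmt9_general k
end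

section
/- For any integer k ≥ 1 and any permutation gate π in 𝒞ₖ₊₁ on n qubits, every coordinate of the polynomial representation of π⁻¹ has degree at most k. -/
/-! ### Auxiliary development for stmt10 -/

section Aux

open Finset

/-- Sign character on `ZMod 2`. -/
noncomputable def sgn (x : ZMod 2) : ℂ := (-1 : ℂ) ^ x.val

lemma zmod2_cases (x : ZMod 2) : x = 0 ∨ x = 1 := by revert x; decide

lemma sgn_zero : sgn 0 = 1 := by
  rw [sgn, (by decide : (0 : ZMod 2).val = 0)]; norm_num

lemma sgn_one : sgn 1 = -1 := by
  rw [sgn, (by decide : (1 : ZMod 2).val = 1)]; norm_num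

lemma sgn_add (x y : ZMod 2) : sgn (x + y) = sgn x * sgn y := by
  rcases zmod2_cases x with rfl | rfl <;> rcases zmod2_cases y with rfl | rfl <;>
    simp [sgn_zero, sgn_one, (by decide : (1 : ZMod 2) + 1 = 0)]

lemma star_sgn (x : ZMod 2) : star (sgn x) = sgn x := by
  simp [sgn]

lemma sgn_cases (x : ZMod 2) : sgn x = 1 ∨ sgn x = -1 := by
  rcases zmod2_cases x with rfl | rfl <;> simp [sgn_zero, sgn_one]

lemma sgn_mul_self (x : ZMod 2) : sgn x * sgn x = 1 := by
  rcases sgn_cases x with h | h <;> rw [h] <;> norm_num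

lemma sgn_ne_zero (x : ZMod 2) : sgn x ≠ 0 := by
  rcases sgn_cases x with h | h <;> rw [h] <;> norm_num

lemma sgn_inj (x y : ZMod 2) (h : sgn x = sgn y) : x = y := by
  rcases zmod2_cases x with rfl | rfl <;> rcases zmod2_cases y with rfl | rfl <;>
    simp_all [sgn_zero, sgn_one] <;> norm_num at h

/-- Dot product on `𝔽₂ⁿ`. -/
def dotp {n : ℕ} (z b : QV n) : ZMod 2 := ∑ i, z i * b i

lemma dotp_add_right {n : ℕ} (z b c : QV n) :
    dotp z (b + c) = dotp z b + dotp z c := by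
  simp [dotp, mul_add, Finset.sum_add_distrib]

lemma dotp_add_left {n : ℕ} (z w b : QV n) :
    dotp (z + w) b = dotp z b + dotp w b := by
  simp [dotp, add_mul, Finset.sum_add_distrib]

lemma dotp_zero_right {n : ℕ} (z : QV n) : dotp z 0 = 0 := by simp [dotp]

lemma dotp_zero_left {n : ℕ} (b : QV n) : dotp 0 b = 0 := by simp [dotp]

lemma dotp_stdBasis_right {n : ℕ} (z : QV n) (i : Fin n) :
    dotp z (stdBasis n i) = z i := by
  simp [dotp, stdBasis, mul_ite]

lemma dotp_stdBasis_left {n : ℕ} (b : QV n) (i : Fin n) :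
    dotp (stdBasis n i) b = b i := by
  simp [dotp, stdBasis, ite_mul]

lemma QV.add_self {n : ℕ} (v : QV n) : v + v = 0 := by
  funext i
  have : ∀ x : ZMod 2, x + x = 0 := by decide
  exact this (v i)

/-- "Functional" matrices: `|b⟩ ↦ φ(b)|g(b)⟩`. -/
noncomputable def FMat (n : ℕ) (g : QV n → QV n) (φ : QV n → ℂ) : QMat n :=
  fun a b => if a = g b then φ b else 0

lemma FMat_mul {n : ℕ} (g₁ g₂ : QV n → QV n) (φ₁ φ₂ : QV n → ℂ) :
    FMat n g₁ φ₁ * FMat n g₂ φ₂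
      = FMat n (fun b => g₁ (g₂ b)) (fun b => φ₁ (g₂ b) * φ₂ b) := by
  funext a b
  simp only [Matrix.mul_apply, FMat]
  rw [Finset.sum_eq_single (g₂ b)]
  · by_cases h : a = g₁ (g₂ b) <;> simp [h]
  · intro c _ hc
    simp [hc]
  · simp

lemma smul_FMat {n : ℕ} (c : ℂ) (g : QV n → QV n) (φ : QV n → ℂ) :
    c • FMat n g φ = FMat n g (fun b => c * φ b) := by
  funext a b
  simp [FMat, Matrix.smul_apply, mul_ite]

lemma star_FMat_of_involutive {n : ℕ} (g : QV n → QV n)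
    (hg : ∀ x, g (g x) = x) (φ : QV n → ℂ) :
    star (FMat n g φ) = FMat n g (fun b => star (φ (g b))) := by
  funext a b
  simp only [Matrix.star_apply, FMat]
  by_cases h : a = g b
  · subst h; simp [hg]
  · have h' : b ≠ g a := by
      intro hb; exact h (by rw [hb, hg])
    simp [h, h']

lemma FMat_id_one {n : ℕ} : FMat n (fun b => b) (fun _ => 1) = (1 : QMat n) := by
  funext a b
  simp [FMat, Matrix.one_apply]

lemma XZGate_eq {n : ℕ} (u z : QV n) :
    XZGate n u z = FMat n (fun b => b + u) (fun b => sgn (dotp z b)) := by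
  funext a b
  simp only [XZGate, FMat]
  congr 1
  have hval : ∀ x y : ZMod 2, (x * y).val = x.val * y.val := by decide
  have : sgn (dotp z b) = ∏ i, (-1 : ℂ) ^ ((z i).val * (b i).val) := by
    rw [dotp]
    induction (Finset.univ : Finset (Fin n)) using Finset.cons_induction with
    | empty => simp [sgn_zero]
    | cons i s hi ih =>
        rw [Finset.sum_cons, Finset.prod_cons, sgn_add, ih, ← hval]
        rfl
  rw [this, ← Finset.prod_pow_eq_pow_sum]

end Aux

lemma FMat_congr {n : ℕ} {g g' : QV n → QV n} {φ φ' : QV n → ℂ}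
    (hg : ∀ b, g b = g' b) (hφ : ∀ b, φ b = φ' b) : FMat n g φ = FMat n g' φ' := by
  funext a b
  rw [FMat, FMat, hg b, hφ b]
section Pauli

variable {n : ℕ}

lemma XZ_mul (u z u' z' : QV n) :
    XZGate n u z * XZGate n u' z'
      = sgn (dotp z u') • XZGate n (u + u') (z + z') := by
  rw [XZGate_eq, XZGate_eq, FMat_mul, XZGate_eq, smul_FMat]
  refine FMat_congr (fun b => ?_) (fun b => ?_)
  · rw [add_assoc, add_comm u' u]
  · rw [dotp_add_right, dotp_add_left, sgn_add, sgn_add]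
    ring

lemma star_XZ (u z : QV n) :
    star (XZGate n u z) = sgn (dotp z u) • XZGate n u z := by
  rw [XZGate_eq, star_FMat_of_involutive _ (fun x => by
    rw [add_assoc, QV.add_self, add_zero]), smul_FMat]
  refine FMat_congr (fun b => rfl) (fun b => ?_)
  rw [star_sgn, dotp_add_right, sgn_add, mul_comm]

lemma XZ_zero_zero : XZGate n 0 0 = (1 : QMat n) := by
  rw [XZGate_eq, ← FMat_id_one]
  exact FMat_congr (fun b => add_zero b) (fun b => by rw [dotp_zero_left, sgn_zero])

def IsPhase (c : ℂ) : Prop := c = 1 ∨ c = -1 ∨ c = Complex.I ∨ c = -Complex.I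

lemma IsPhase.mul {c d : ℂ} (hc : IsPhase c) (hd : IsPhase d) : IsPhase (c * d) := by
  rcases hc with rfl | rfl | rfl | rfl <;> rcases hd with rfl | rfl | rfl | rfl <;>
    simp [IsPhase, Complex.I_mul_I] <;> norm_num [Complex.I_mul_I]

lemma IsPhase.sgn (x : ZMod 2) : IsPhase (sgn x) := by
  rcases sgn_cases x with h | h <;> rw [h] <;> simp [IsPhase]

lemma isPhase_star {c : ℂ} (hc : IsPhase c) : IsPhase (star c) := by
  rcases hc with rfl | rfl | rfl | rfl <;> simp [IsPhase, Complex.conj_I]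

lemma IsPhase.ne_zero {c : ℂ} (hc : IsPhase c) : c ≠ 0 := by
  rcases hc with rfl | rfl | rfl | rfl <;> norm_num [Complex.I_ne_zero]

lemma IsPhase.mul_star_self {c : ℂ} (hc : IsPhase c) : c * star c = 1 := by
  rcases hc with rfl | rfl | rfl | rfl <;>
    simp [Complex.conj_I, Complex.I_mul_I] <;> norm_num [Complex.I_mul_I]

lemma pauli_mem_iff (P : QMat n) :
    P ∈ PauliGroup n ↔ ∃ (c : ℂ) (u z : QV n), IsPhase c ∧ P = c • XZGate n u z :=
  Iff.rfl

lemma pauli_mul {P Q : QMat n} (hP : P ∈ PauliGroup n) (hQ : Q ∈ PauliGroup n) :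
    P * Q ∈ PauliGroup n := by
  obtain ⟨c, u, z, hc, rfl⟩ := hP
  obtain ⟨c', u', z', hc', rfl⟩ := hQ
  refine ⟨c * c' * sgn (dotp z u'), u + u', z + z',
    (IsPhase.mul hc hc').mul (IsPhase.sgn _), ?_⟩
  rw [Matrix.smul_mul, Matrix.mul_smul, XZ_mul, smul_smul, smul_smul, mul_assoc]

lemma pauli_star {P : QMat n} (hP : P ∈ PauliGroup n) : star P ∈ PauliGroup n := by
  obtain ⟨c, u, z, hc, rfl⟩ := hP
  refine ⟨star c * sgn (dotp z u), u, z, (isPhase_star hc).mul (IsPhase.sgn _), ?_⟩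
  rw [star_smul, star_XZ, smul_smul]

lemma pauli_unitary {P : QMat n} (hP : P ∈ PauliGroup n) :
    P ∈ Matrix.unitaryGroup (QV n) ℂ := by
  obtain ⟨c, u, z, hc, rfl⟩ := hP
  have key : (c • XZGate n u z) * star (c • XZGate n u z) = 1 := by
    rw [star_smul, star_XZ, Matrix.smul_mul, Matrix.mul_smul, Matrix.mul_smul,
      XZ_mul, QV.add_self, QV.add_self, XZ_zero_zero, smul_smul, smul_smul, smul_smul]
    have hc' : IsPhase c := hc
    have : c * star c * sgn (dotp z u) * sgn (dotp z u) = 1 := by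
      rw [mul_assoc, sgn_mul_self, mul_one, IsPhase.mul_star_self hc']
    rw [this, one_smul]
  exact Matrix.mem_unitaryGroup_iff.mpr key

lemma pauli_mul_clifford :
    ∀ (k : ℕ) (P A : QMat n), P ∈ PauliGroup n → A ∈ CliffordLevel n k →
      P * A ∈ CliffordLevel n k ∧ A * P ∈ CliffordLevel n k := by
  intro k
  induction k with
  | zero => intro P A _ hA; exact absurd hA (by simp [CliffordLevel])
  | succ k ih =>
    match k with
    | 0 =>
      intro P A hP hA
      exact ⟨pauli_mul hP hA, pauli_mul hA hP⟩
    | k + 1 =>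
      rintro P A hP ⟨hAu, hAc⟩
      refine ⟨⟨mul_mem (pauli_unitary hP) hAu, ?_⟩, ⟨mul_mem hAu (pauli_unitary hP), ?_⟩⟩
      · intro Q hQ
        have h1 : P * A * Q * star (P * A) = P * (A * Q * star A) * star P := by
          rw [Matrix.star_mul]
          noncomm_ring
        rw [h1]
        have hB := hAc Q hQ
        have h2 := (ih P (A * Q * star A) hP hB).1
        exact (ih (star P) (P * (A * Q * star A)) (pauli_star hP) h2).2
      · intro Q hQ
        have h1 : A * P * Q * star (A * P) = A * (P * Q * star P) * star A := by
          rw [Matrix.star_mul]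
          noncomm_ring
        rw [h1]
        exact hAc _ (pauli_mul (pauli_mul hP hQ) (pauli_star hP))

end Pauli
section Diag

variable {n : ℕ}

/-- Diagonal gate with `±1` phases given by `g`. -/
noncomputable def DiagGate (n : ℕ) (g : QV n → ZMod 2) : QMat n :=
  FMat n (fun b => b) (fun b => sgn (g b))

lemma star_DiagGate (g : QV n → ZMod 2) : star (DiagGate n g) = DiagGate n g := by
  rw [DiagGate, star_FMat_of_involutive _ (fun x => rfl)]
  exact FMat_congr (fun b => rfl) (fun b => star_sgn _)

/-- Conjugation of `X_{eᵢ}` by a diagonal gate, times `X_{eᵢ}`, is the diagonal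
gate of the discrete derivative. -/
lemma diag_deriv_eq (g : QV n → ZMod 2) (i : Fin n) :
    XZGate n (stdBasis n i) 0 *
      (DiagGate n g * XZGate n (stdBasis n i) 0 * star (DiagGate n g))
      = DiagGate n (fun v => g (v + stdBasis n i) + g v) := by
  rw [star_DiagGate, DiagGate, DiagGate, XZGate_eq, FMat_mul, FMat_mul, FMat_mul]
  refine FMat_congr (fun b => ?_) (fun b => ?_)
  · show b + stdBasis n i + stdBasis n i = b
    rw [add_assoc, QV.add_self, add_zero]
  · simp only [dotp_zero_left, sgn_zero, one_mul, mul_one, sgn_add]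

lemma X_mem_pauli (i : Fin n) : XZGate n (stdBasis n i) 0 ∈ PauliGroup n :=
  ⟨1, stdBasis n i, 0, Or.inl rfl, (one_smul _ _).symm⟩

lemma Z_mem_pauli (m : Fin n) : XZGate n 0 (stdBasis n m) ∈ PauliGroup n :=
  ⟨1, 0, stdBasis n m, Or.inl rfl, (one_smul _ _).symm⟩

/-- The characteristic vector of `R`. -/
lemma chi_apply (R : Finset (Fin n)) (i : Fin n) :
    (∑ j ∈ R, stdBasis n j) i = if i ∈ R then 1 else 0 := by
  rw [Finset.sum_apply]
  simp [stdBasis]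

lemma dotp_chi (z : QV n) (R : Finset (Fin n)) :
    dotp z (∑ j ∈ R, stdBasis n j) = ∑ j ∈ R, z j := by
  induction R using Finset.cons_induction with
  | empty => simp [dotp_zero_right]
  | cons j R hj ih =>
      rw [Finset.sum_cons, Finset.sum_cons, dotp_add_right, dotp_stdBasis_right, ih]

/-- Key Möbius step: the coefficient of `T ∪ {i}` in `g` is the coefficient of `T`
in the derivative of `g` in direction `eᵢ`. -/
lemma mlCoeff_insert (g : QV n → ZMod 2) (i : Fin n) (T : Finset (Fin n)) (hi : i ∉ T) :
    mlCoeff n g (insert i T) = mlCoeff n (fun v => g (v + stdBasis n i) + g v) T := by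
  classical
  have hdisj : Disjoint T.powerset (T.powerset.image (insert i)) := by
    rw [Finset.disjoint_right]
    intro R hR hR'
    rw [Finset.mem_image] at hR
    obtain ⟨S, _, rfl⟩ := hR
    rw [Finset.mem_powerset] at hR'
    exact hi (hR' (Finset.mem_insert_self i S))
  have hinj : ∀ A ∈ T.powerset, ∀ B ∈ T.powerset, insert i A = insert i B → A = B := by
    intro A hA B hB h
    rw [Finset.mem_powerset] at hA hB
    have hiA : i ∉ A := fun h' => hi (hA h')
    have hiB : i ∉ B := fun h' => hi (hB h')
    rw [← Finset.erase_insert hiA, ← Finset.erase_insert hiB, h]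
  rw [mlCoeff, mlCoeff, Finset.powerset_insert, Finset.sum_union hdisj,
    Finset.sum_image hinj, Finset.sum_add_distrib,
    add_comm (∑ R ∈ T.powerset, g ((∑ j ∈ R, stdBasis n j) + stdBasis n i))]
  congr 1
  refine Finset.sum_congr rfl fun R hR => ?_
  rw [Finset.mem_powerset] at hR
  have hiR : i ∉ R := fun h => hi (hR h)
  rw [Finset.sum_insert hiR, add_comm (stdBasis n i)]

lemma mlCoeff_const (c : ZMod 2) (S : Finset (Fin n)) (hS : S.Nonempty) :
    mlCoeff n (fun _ => c) S = 0 := by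
  rw [mlCoeff, Finset.sum_const, Finset.card_powerset, nsmul_eq_mul]
  have : ((2 ^ S.card : ℕ) : ZMod 2) = 0 := by
    rw [Nat.cast_pow, ZMod.natCast_self, zero_pow (Finset.card_ne_zero.mpr hS)]
  rw [this, zero_mul]

end Diag
section Main

variable {n : ℕ}

lemma diag_pauli_deg (g : QV n → ZMod 2) (h : DiagGate n g ∈ PauliGroup n) :
    ∀ T : Finset (Fin n), mlCoeff n g T ≠ 0 → T.card ≤ 1 := by
  obtain ⟨c, u, z, hc, hEq⟩ := h
  have hc' : IsPhase c := hc
  rw [DiagGate, XZGate_eq, smul_FMat] at hEq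
  have hent : ∀ a b : QV n, (if a = b then sgn (g b) else 0)
      = (if a = b + u then c * sgn (dotp z b) else 0) := by
    intro a b
    have := congrFun (congrFun hEq a) b
    simpa [FMat] using this
  have hu : u = 0 := by
    by_contra hu
    have h1 := hent u 0
    rw [if_neg hu, if_pos (zero_add u).symm, dotp_zero_right, sgn_zero, mul_one] at h1
    exact hc'.ne_zero h1.symm
  subst hu
  have hv : ∀ v : QV n, sgn (g v) = c * sgn (dotp z v) := by
    intro v
    have h1 := hent v v
    rwa [if_pos rfl, if_pos (add_zero v).symm] at h1
  have hc0 : c = sgn (g 0) := by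
    have := hv 0
    rwa [dotp_zero_right, sgn_zero, mul_one, eq_comm] at this
  have haff : ∀ v : QV n, g v = g 0 + dotp z v := by
    intro v
    refine sgn_inj _ _ ?_
    rw [hv v, hc0, ← sgn_add]
  intro T hT
  by_contra hcard
  push_neg at hcard
  have hpos : 0 < T.card := by omega
  obtain ⟨i, hi⟩ := Finset.card_pos.mp hpos
  have hkey : mlCoeff n g T = mlCoeff n (fun v => g (v + stdBasis n i) + g v) (T.erase i) := by
    rw [← mlCoeff_insert g i (T.erase i) (Finset.notMem_erase i T), Finset.insert_erase hi]
  have hconst : (fun v : QV n => g (v + stdBasis n i) + g v) = fun _ => z i := by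
    funext v
    rw [haff (v + stdBasis n i), haff v, dotp_add_right, dotp_stdBasis_right]
    have : ∀ a b c : ZMod 2, a + (b + c) + (a + b) = c := by decide
    exact this _ _ _
  have hne : (T.erase i).Nonempty := by
    rw [← Finset.card_pos, Finset.card_erase_of_mem hi]
    omega
  rw [hkey, hconst, mlCoeff_const _ _ hne] at hT
  exact hT rfl

lemma diag_clifford_deg : ∀ (j : ℕ) (g : QV n → ZMod 2),
    DiagGate n g ∈ CliffordLevel n (j + 1) →
    ∀ T : Finset (Fin n), mlCoeff n g T ≠ 0 → T.card ≤ j + 1 := by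
  intro j
  induction j with
  | zero => exact fun g hg T hT => diag_pauli_deg g hg T hT
  | succ j ih =>
      intro g hg T hT
      obtain ⟨hu, hconj⟩ := hg
      rcases T.eq_empty_or_nonempty with rfl | ⟨i, hi⟩
      · simp
      · have hM := hconj _ (X_mem_pauli i)
        have hD : DiagGate n (fun v => g (v + stdBasis n i) + g v)
            ∈ CliffordLevel n (j + 1) := by
          rw [← diag_deriv_eq g i]
          exact (pauli_mul_clifford (j + 1) _ _ (X_mem_pauli i) hM).1
        have hkey : mlCoeff n (fun v => g (v + stdBasis n i) + g v) (T.erase i) ≠ 0 := by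
          rw [← mlCoeff_insert g i (T.erase i) (Finset.notMem_erase i T),
            Finset.insert_erase hi]
          exact hT
        have := ih _ hD (T.erase i) hkey
        rw [Finset.card_erase_of_mem hi] at this
        omega

lemma perm_conj (f : QV n ≃ QV n) (m : Fin n) :
    permGate n f * XZGate n 0 (stdBasis n m) * star (permGate n f)
      = DiagGate n (fun v => f.symm v m) := by
  have hperm : permGate n f = FMat n f (fun _ => 1) := rfl
  have hstar : star (permGate n f) = FMat n f.symm (fun _ => 1) := by
    funext a b
    simp only [Matrix.star_apply, permGate, FMat]
    by_cases h : a = f.symm b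
    · subst h
      simp [Equiv.apply_symm_apply]
    · have h' : b ≠ f a := fun hb => h (by rw [hb, Equiv.symm_apply_apply])
      simp [h, h']
  rw [hstar, hperm, XZGate_eq, FMat_mul, FMat_mul, DiagGate]
  refine FMat_congr (fun b => ?_) (fun b => ?_)
  · show f (f.symm b + 0) = b
    rw [add_zero, Equiv.apply_symm_apply]
  · simp only [one_mul, mul_one, add_zero, dotp_stdBasis_left]

end Main
/-- For `k ≥ 1` and a permutation gate `π ∈ 𝒞ₖ₊₁`, every coordinate of
the polynomial representation of `π⁻¹` has degree at most `k`. -/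
theorem stmt10 (n k : ℕ) (hn : 1 ≤ n) (hk : 1 ≤ k) (f : QV n ≃ QV n)
    (hf : permGate n f ∈ CliffordLevel n (k + 1)) :
    ∀ (m : Fin n) (T : Finset (Fin n)),
      mlCoeff n (fun v => f.symm v m) T ≠ 0 → T.card ≤ k := by
  intro m T hT
  obtain ⟨k', rfl⟩ : ∃ k', k = k' + 1 := ⟨k - 1, by omega⟩
  have hf' : permGate n f ∈ CliffordLevel n (k' + 1 + 1) := hf
  obtain ⟨hu, hconj⟩ := hf'
  have hM := hconj _ (Z_mem_pauli m)
  rw [perm_conj] at hM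
  exact diag_clifford_deg k' _ hM T hT
end

section
/- Let F be a field and let A₁, …, A_k be linear endomorphisms of an n-dimensional vector space V over F such that Aⱼ² = 0 for all j and AᵢAⱼ = AⱼAᵢ for all i, j. Then there exists a basis of V in which all the Aᵢ are represented by strictly lower triangular matrices. -/
/-! Induction on the dimension. Commuting square-zero maps have a common nonzero kernel
vector `v`: on the joint kernel `W` of some of them the next map `A` preserves `W`, and either
vanishes there or `A w ≠ 0` lies in `W ∩ ker A`. The maps descend to `V ⧸ K ∙ v`; lifting a
basis that triangularizes them there and appending `v` as the last vector does the job. -/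

open Module Submodule

theorem Submodule.mem_sup_span_of_mkQ_mem_span {R M : Type*} [Ring R] [AddCommGroup M]
    [Module R M] {p : Submodule R M} {s : Set M} {x : M}
    (h : p.mkQ x ∈ span R (p.mkQ '' s)) : x ∈ p ⊔ span R s := by
  rwa [span_image, ← mem_comap, comap_map_mkQ] at h

namespace Module.End

variable {R M ι : Type*}

theorem biInf_ker_ne_bot_of_sq_eq_zero [Semiring R] [AddCommMonoid M] [Module R M]
    [Nontrivial M] {A : ι → End R M} (hsq : ∀ i, A i * A i = 0)
    (hcomm : ∀ i j, Commute (A i) (A j)) (s : Finset ι) :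
    ⨅ i ∈ s, LinearMap.ker (A i) ≠ ⊥ := by
  classical
  induction s using Finset.induction_on with
  | empty => simp
  | insert a s _ ih =>
    set W := ⨅ i ∈ s, LinearMap.ker (A i)
    have hW : ∀ w ∈ W, A a w ∈ W := by
      simp only [W, mem_iInf, LinearMap.mem_ker]
      intro w hw i hi
      rw [← Module.End.mul_apply, (hcomm i a).eq, Module.End.mul_apply, hw i hi, map_zero]
    rw [Finset.iInf_insert]
    by_cases hker : W ≤ LinearMap.ker (A a)
    · rwa [inf_eq_right.mpr hker]
    · obtain ⟨w, hw, hAw⟩ := SetLike.not_le_iff_exists.mp hker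
      refine (Submodule.ne_bot_iff _).mpr ⟨A a w, ⟨?_, hW w hw⟩, hAw⟩
      change A a (A a w) = 0
      rw [← Module.End.mul_apply, hsq, LinearMap.zero_apply]

theorem exists_ne_zero_forall_apply_eq_zero_of_sq_eq_zero [Finite ι] [Semiring R]
    [AddCommMonoid M] [Module R M] [Nontrivial M] {A : ι → End R M}
    (hsq : ∀ i, A i * A i = 0) (hcomm : ∀ i j, Commute (A i) (A j)) :
    ∃ v : M, v ≠ 0 ∧ ∀ i, A i v = 0 := by
  have := Fintype.ofFinite ι
  obtain ⟨v, hv, hv0⟩ :=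
    (Submodule.ne_bot_iff _).mp (biInf_ker_ne_bot_of_sq_eq_zero hsq hcomm Finset.univ)
  simp only [Finset.mem_univ, iInf_pos, mem_iInf, LinearMap.mem_ker] at hv
  exact ⟨v, hv0, hv⟩

end Module.End

theorem Module.Basis.toMatrix_eq_zero_of_mem_span_Ioi {R M ι : Type*} [CommSemiring R]
    [AddCommMonoid M] [Module R M] [Fintype ι] [DecidableEq ι] [LinearOrder ι]
    {b : Basis ι R M} {f : M →ₗ[R] M} (hf : ∀ q, f (b q) ∈ span R (b '' Set.Ioi q))
    {p q : ι} (hpq : p ≤ q) : LinearMap.toMatrix b b f p q = 0 := by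
  rw [LinearMap.toMatrix_apply, ← Finsupp.notMem_support_iff]
  exact fun hp => (Set.mem_Ioi.mp (b.mem_span_image.mp (hf q) hp)).not_ge hpq

theorem Module.Basis.exists_snoc_of_quotient_span_singleton {K V : Type*} [DivisionRing K]
    [AddCommGroup V] [Module K V] [FiniteDimensional K V] {v : V} (hv : v ≠ 0) {m : ℕ}
    (bq : Basis (Fin m) K (V ⧸ K ∙ v)) :
    ∃ b : Basis (Fin (m + 1)) K V, b (Fin.last m) = v ∧
      (∀ j, (K ∙ v).mkQ (b j.castSucc) = bq j) ∧
      ∀ x S, (K ∙ v).mkQ x ∈ span K (bq '' S) →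
        x ∈ span K (b '' insert (Fin.last m) (Fin.castSucc '' S)) := by
  choose u hu using fun j => (K ∙ v).mkQ_surjective (bq j)
  set c : Fin (m + 1) → V := Fin.snoc u v
  have hlift : ∀ x S, (K ∙ v).mkQ x ∈ span K (bq '' S) →
      x ∈ span K (c '' insert (Fin.last m) (Fin.castSucc '' S)) := by
    intro x S hx
    have hc : c '' insert (Fin.last m) (Fin.castSucc '' S) = insert v (u '' S) := by
      simp [c, Set.image_insert_eq, Set.image_image]
    have hbq : bq = (K ∙ v).mkQ ∘ u := funext fun j => (hu j).symm
    rw [hbq, Set.image_comp] at hx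
    rw [hc, span_insert]
    exact mem_sup_span_of_mkQ_mem_span hx
  have hspan : ⊤ ≤ span K (Set.range c) := fun x _ =>
    span_mono (Set.image_subset_range _ _) (hlift x Set.univ (by simp [Set.image_univ]))
  have hcard : Fintype.card (Fin (m + 1)) = finrank K V := by
    have := (K ∙ v).finrank_quotient_add_finrank
    rw [finrank_span_singleton hv, finrank_eq_card_basis bq] at this
    simp [← this]
  refine ⟨basisOfTopLeSpanOfCardEqFinrank c hspan hcard, ?_⟩
  simp only [coe_basisOfTopLeSpanOfCardEqFinrank]
  exact ⟨by simp [c], fun j => by simp [c, hu], hlift⟩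

namespace Module.End

variable {K V ι : Type*} [DivisionRing K] [AddCommGroup V] [Module K V]

theorem exists_basis_mem_span_Ioi_of_sq_eq_zero [Finite ι] [FiniteDimensional K V] {n : ℕ}
    (hn : finrank K V = n) {A : ι → End K V} (hsq : ∀ i, A i * A i = 0)
    (hcomm : ∀ i j, Commute (A i) (A j)) :
    ∃ b : Basis (Fin n) K V, ∀ i q, A i (b q) ∈ span K (b '' Set.Ioi q) := by
  induction n generalizing V with
  | zero =>
    have := finrank_zero_iff.mp hn
    exact ⟨Basis.empty V, fun _ q => q.elim0⟩
  | succ m ih =>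
    have : Nontrivial V := finrank_pos_iff (R := K).mp (by omega)
    obtain ⟨v, hv0, hAv⟩ := exists_ne_zero_forall_apply_eq_zero_of_sq_eq_zero hsq hcomm
    set p := K ∙ v
    have hp : ∀ i, p ≤ p.comap (A i) := fun i =>
      (span_singleton_le_iff_mem _ _).mpr (by simp [hAv i])
    set B : ι → End K (V ⧸ p) := fun i => p.mapQ p (A i) (hp i)
    have hBsq : ∀ i, B i * B i = 0 := fun i => by
      ext x
      exact congr_arg p.mkQ (LinearMap.congr_fun (hsq i) x)
    have hBcomm : ∀ i j, Commute (B i) (B j) := fun i j => by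
      ext x
      exact congr_arg p.mkQ (LinearMap.congr_fun (hcomm i j).eq x)
    have hpm : finrank K (V ⧸ p) = m := by
      have := p.finrank_quotient_add_finrank
      rw [finrank_span_singleton hv0] at this
      omega
    obtain ⟨bq, hbq⟩ := ih hpm hBsq hBcomm
    obtain ⟨b, hb_last, hb_castSucc, hlift⟩ := Basis.exists_snoc_of_quotient_span_singleton hv0 bq
    refine ⟨b, fun i q => ?_⟩
    induction q using Fin.lastCases with
    | last => simp [hb_last, hAv i]
    | cast j =>
      have hmk : p.mkQ (A i (b j.castSucc)) = B i (bq j) := by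
        rw [← hb_castSucc j]
        rfl
      have hsub : insert (Fin.last m) (Fin.castSucc '' Set.Ioi j) ⊆ Set.Ioi j.castSucc := by
        rintro _ (rfl | ⟨k, hk, rfl⟩)
        · exact Fin.castSucc_lt_last j
        · exact Fin.castSucc_lt_castSucc_iff.mpr hk
      exact span_mono (Set.image_mono hsub) (hlift _ _ (hmk ▸ hbq i j))

end Module.End

/-- Commuting square-zero endomorphisms of an `n`-dimensional vector
space can be simultaneously strictly lower triangularized. -/
theorem stmt14 (F : Type*) [Field F] (V : Type*) [AddCommGroup V] [Module F V]
    [FiniteDimensional F V] (n k : ℕ) (hdim : Module.finrank F V = n)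
    (A : Fin k → V →ₗ[F] V)
    (hsq : ∀ j, A j ∘ₗ A j = 0)
    (hcomm : ∀ i j, A i ∘ₗ A j = A j ∘ₗ A i) :
    ∃ b : Module.Basis (Fin n) F V, ∀ (j : Fin k) (p q : Fin n), p ≤ q →
      LinearMap.toMatrix b b (A j) p q = 0 := by
  obtain ⟨b, hb⟩ := End.exists_basis_mem_span_Ioi_of_sq_eq_zero hdim hsq hcomm
  exact ⟨b, fun j _ _ hpq => b.toMatrix_eq_zero_of_mem_span_Ioi (hb j) hpq⟩
end

section
/- Consider states consisting of a list of n pairs (A₁,b₁), …, (Aₙ,bₙ), where each Aᵢ is an n×n strictly lower triangular matrix over 𝔽₂ and each bᵢ ∈ 𝔽₂ⁿ. Allow two operations: a swap, exchanging the pairs at two indices i and j; and a compose at distinct indices i and j, replacing Aᵢ by Aᵢ + Aⱼ + AᵢAⱼ and bᵢ by bᵢ + bⱼ + Aᵢbⱼ (leaving the pair at index j unchanged). Then from any initial state one can perform a finite sequence of these operations to reach either a state in which bᵢ = eᵢ for all i ∈ [n], or a state in which bᵢ = 0 for some i. -/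
/-- A state: a list of `n` pairs `(Aᵢ, bᵢ)` of an `n×n` matrix over `𝔽₂` and a vector. -/
abbrev PairState (n : ℕ) := Fin n → Matrix (Fin n) (Fin n) (ZMod 2) × QV n

/-- One allowed operation: a swap of two indices, or a compose at distinct indices
`i ≠ j`, replacing `Aᵢ` by `Aᵢ + Aⱼ + AᵢAⱼ` and `bᵢ` by `bᵢ + bⱼ + Aᵢbⱼ`. -/
def pairStep (n : ℕ) (s t : PairState n) : Prop :=
  (∃ i j : Fin n, t = s ∘ (Equiv.swap i j)) ∨
  (∃ i j : Fin n, i ≠ j ∧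
    t = Function.update s i
      ((s i).1 + (s j).1 + (s i).1 * (s j).1,
       (s i).2 + (s j).2 + (s i).1.mulVec ((s j).2)))

/-! Let `ν(b) = leadIdx b` be the index of the lowest nonzero coordinate of `b` (`n` if `b = 0`).
As `Aᵢ` is strictly lower triangular, `Aᵢ bⱼ` vanishes up to and including position `ν(bⱼ)`; so
over `𝔽₂`, if `ν(bᵢ) = ν(bⱼ) < n`, composing at `(i, j)` strictly raises `ν(bᵢ)`. Doing this while
possible, either some `bᵢ` becomes `0`, or the `ν(bᵢ)` become distinct, hence a permutation of
`[n]`, and swaps achieve `ν(bᵢ) = i`. Then `bᵢ + eᵢ` plays the role of `bᵢ`: composing `i` with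
`m = ν(bᵢ + eᵢ) > i` strictly raises `ν(bᵢ + eᵢ)` and keeps `ν(bᵢ) = i`, until `bᵢ = eᵢ`.
Termination: in both stages a sum of `n` values of `ν`, each at most `n`, strictly increases. -/

open Relation
open scoped Matrix

theorem exists_reflTransGen_of_measure {α : Type*} {r : α → α → Prop} {P Q : α → Prop}
    (f : α → ℕ) (h : ∀ a, P a → ¬Q a → ∃ b, r a b ∧ P b ∧ f b < f a) (a : α) (ha : P a) :
    ∃ b, ReflTransGen r a b ∧ P b ∧ Q b := by
  by_cases hQ : Q a
  · exact ⟨a, .refl, ha, hQ⟩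
  obtain ⟨b, hab, hb, hlt⟩ := h a ha hQ
  obtain ⟨c, hbc, hc⟩ := exists_reflTransGen_of_measure f h b hb
  exact ⟨c, .head hab hbc, hc⟩
termination_by f a

section LeadIdx

variable {n : ℕ} {R : Type*} [Zero R]

open Classical

def VanishesBelow (b : Fin n → R) (k : ℕ) : Prop := ∀ m : Fin n, (m : ℕ) < k → b m = 0

theorem VanishesBelow.mono {b : Fin n → R} {j k : ℕ} (hb : VanishesBelow b k) (hjk : j ≤ k) :
    VanishesBelow b j :=
  fun m hm => hb m (lt_of_lt_of_le hm hjk)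

noncomputable def leadIdx (b : Fin n → R) : ℕ := Nat.findGreatest (VanishesBelow b) n

theorem vanishesBelow_leadIdx (b : Fin n → R) : VanishesBelow b (leadIdx b) :=
  Nat.findGreatest_spec (m := 0) (Nat.zero_le n) fun _ hm => absurd hm (Nat.not_lt_zero _)

theorem le_leadIdx {b : Fin n → R} {k : ℕ} (hk : k ≤ n) (hb : VanishesBelow b k) :
    k ≤ leadIdx b :=
  Nat.le_findGreatest hk hb

theorem leadIdx_le (b : Fin n → R) : leadIdx b ≤ n := Nat.findGreatest_le n

theorem apply_leadIdx_ne_zero {b : Fin n → R} (h : leadIdx b < n) : b ⟨leadIdx b, h⟩ ≠ 0 := by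
  intro h0
  refine Nat.findGreatest_is_greatest (Nat.lt_succ_self _) h fun m hm => ?_
  rcases Nat.lt_succ_iff_lt_or_eq.mp hm with hm | hm
  · exact vanishesBelow_leadIdx b m hm
  · exact (congrArg b (Fin.ext hm)).trans h0

theorem leadIdx_lt_iff_ne_zero {b : Fin n → R} : leadIdx b < n ↔ b ≠ 0 := by
  constructor
  · rintro h rfl
    exact apply_leadIdx_ne_zero h rfl
  · intro hb
    refine lt_of_le_of_ne (leadIdx_le b) fun h => hb (funext fun m => ?_)
    exact vanishesBelow_leadIdx b m (by omega)

theorem leadIdx_eq {b : Fin n → R} {k : ℕ} (hk : k < n) (hb : VanishesBelow b k)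
    (hbk : b ⟨k, hk⟩ ≠ 0) : leadIdx b = k := by
  refine le_antisymm (not_lt.mp fun hlt => hbk ?_) (le_leadIdx hk.le hb)
  exact vanishesBelow_leadIdx b _ hlt

end LeadIdx

section ZModTwo

variable {n : ℕ}

theorem leadIdx_stdBasis (j : Fin n) : leadIdx (stdBasis n j) = j :=
  leadIdx_eq j.2 (fun m hm => if_neg (Fin.ne_of_lt hm)) (by simp [stdBasis])

theorem leadIdx_add_of_lt {b c : QV n} (h : leadIdx b < leadIdx c) :
    leadIdx (b + c) = leadIdx b := by
  have hb : leadIdx b < n := lt_of_lt_of_le h (leadIdx_le c)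
  refine leadIdx_eq hb (fun m hm => ?_) ?_
  · simp [vanishesBelow_leadIdx b m hm, vanishesBelow_leadIdx c m (hm.trans h)]
  · simpa [vanishesBelow_leadIdx c ⟨_, hb⟩ h] using apply_leadIdx_ne_zero hb

theorem lt_leadIdx_add {b c : QV n} (hb : leadIdx b < n) (h : leadIdx b = leadIdx c) :
    leadIdx b < leadIdx (b + c) := by
  have hc : leadIdx c < n := h ▸ hb
  refine le_leadIdx hb (fun m hm => ?_)
  rcases Nat.lt_succ_iff_lt_or_eq.mp hm with hm | hm
  · simp [vanishesBelow_leadIdx b m hm, vanishesBelow_leadIdx c m (h ▸ hm)]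
  · have hbm : b m ≠ 0 := by convert apply_leadIdx_ne_zero hb using 2; exact Fin.ext hm
    have hcm : c m ≠ 0 := by convert apply_leadIdx_ne_zero hc using 2; exact Fin.ext (hm.trans h)
    exact (by decide : ∀ x y : ZMod 2, x ≠ 0 → y ≠ 0 → x + y = 0) _ _ hbm hcm

namespace StrictLowerTri

variable {A B : Matrix (Fin n) (Fin n) (ZMod 2)}

theorem add_add_mul (hA : StrictLowerTri n A) (hB : StrictLowerTri n B) :
    StrictLowerTri n (A + B + A * B) := by
  intro p q hpq
  have hAB : (A * B) p q = 0 := by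
    rw [Matrix.mul_apply]
    refine Finset.sum_eq_zero fun r _ => ?_
    by_cases hpr : p ≤ r
    · rw [hA p r hpr, zero_mul]
    · rw [hB r q ((not_le.mp hpr).le.trans hpq), mul_zero]
  simp [hA p q hpq, hB p q hpq, hAB]

theorem mulVec_apply_eq_zero (hA : StrictLowerTri n A) {c : QV n} {k : ℕ}
    (hc : VanishesBelow c k) {m : Fin n} (hm : (m : ℕ) ≤ k) : (A *ᵥ c) m = 0 := by
  rw [Matrix.mulVec, dotProduct]
  refine Finset.sum_eq_zero fun q _ => ?_
  by_cases hq : (q : ℕ) < k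
  · simp [hc q hq]
  · simp [hA m q (Fin.le_def.mpr (by omega))]

theorem lt_leadIdx_add_add_mulVec (hA : StrictLowerTri n A) {b c : QV n} (hb : leadIdx b < n)
    (h : leadIdx b = leadIdx c) : leadIdx b < leadIdx (b + c + A *ᵥ c) := by
  refine le_leadIdx hb fun m hm => ?_
  rw [Pi.add_apply, vanishesBelow_leadIdx _ m (hm.trans_le (lt_leadIdx_add hb h)),
    hA.mulVec_apply_eq_zero (vanishesBelow_leadIdx c) (by omega), add_zero]

end StrictLowerTri

end ZModTwo

section PairState

variable {n : ℕ}

def composeAt (s : PairState n) (i j : Fin n) : PairState n :=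
  Function.update s i
    ((s i).1 + (s j).1 + (s i).1 * (s j).1, (s i).2 + (s j).2 + (s i).1 *ᵥ (s j).2)

theorem pairStep_composeAt (s : PairState n) {i j : Fin n} (hij : i ≠ j) :
    pairStep n s (composeAt s i j) :=
  Or.inr ⟨i, j, hij, rfl⟩

@[simp]
theorem composeAt_self (s : PairState n) (i j : Fin n) :
    composeAt s i j i =
      ((s i).1 + (s j).1 + (s i).1 * (s j).1, (s i).2 + (s j).2 + (s i).1 *ᵥ (s j).2) :=
  Function.update_self ..

@[simp]
theorem composeAt_of_ne (s : PairState n) {i k : Fin n} (j : Fin n) (hk : k ≠ i) :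
    composeAt s i j k = s k :=
  Function.update_of_ne hk ..

theorem strictLowerTri_composeAt {s : PairState n} (hs : ∀ k, StrictLowerTri n (s k).1)
    (i j k : Fin n) : StrictLowerTri n (composeAt s i j k).1 := by
  by_cases hk : k = i
  · subst hk
    simpa using (hs k).add_add_mul (hs j)
  · simpa [hk] using hs k

theorem sum_composeAt_lt (g : Fin n → QV n → ℕ) {s : PairState n} {i j : Fin n}
    (h : g i (composeAt s i j i).2 < g i (s i).2) :
    ∑ k, g k (composeAt s i j k).2 < ∑ k, g k (s k).2 := by
  refine Finset.sum_lt_sum (fun k _ => ?_) ⟨i, Finset.mem_univ i, h⟩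
  by_cases hk : k = i
  · subst hk; exact h.le
  · rw [composeAt_of_ne s j hk]

theorem reflTransGen_pairStep_comp_perm (s : PairState n) (σ : Equiv.Perm (Fin n)) :
    ReflTransGen (pairStep n) s (s ∘ σ) := by
  induction σ using Equiv.Perm.swap_induction_on generalizing s with
  | one => exact .refl
  | swap_mul σ x y _ ih =>
    exact .head (Or.inl ⟨x, y, rfl⟩) (ih (s ∘ Equiv.swap x y))

def IsEchelon (s : PairState n) : Prop := ∀ j, leadIdx (s j).2 = j

theorem exists_perm_isEchelon {s : PairState n} (hs : ∀ i, (s i).2 ≠ 0)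
    (hinj : Function.Injective fun i => leadIdx (s i).2) :
    ∃ σ : Equiv.Perm (Fin n), IsEchelon (s ∘ σ) := by
  let f : Fin n → Fin n := fun i => ⟨leadIdx (s i).2, leadIdx_lt_iff_ne_zero.mpr (hs i)⟩
  have hf : f.Bijective :=
    Finite.injective_iff_bijective.mp fun a b hab => hinj (congrArg Fin.val hab)
  exact ⟨(Equiv.ofBijective f hf).symm, fun j =>
    congrArg Fin.val ((Equiv.ofBijective f hf).apply_symm_apply j)⟩

theorem exists_reflTransGen_eq_zero_or_isEchelon (s : PairState n)
    (hs : ∀ i, StrictLowerTri n (s i).1) :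
    ∃ t, ReflTransGen (pairStep n) s t ∧ (∀ i, StrictLowerTri n (t i).1) ∧
      ((∃ i, (t i).2 = 0) ∨ ∃ σ : Equiv.Perm (Fin n), IsEchelon (t ∘ σ)) := by
  refine exists_reflTransGen_of_measure (fun t => ∑ k, (n - leadIdx (t k).2)) ?_ s hs
  rintro t ht hQ
  simp only [not_or, not_exists] at hQ
  obtain ⟨hne, hnot⟩ := hQ
  obtain ⟨i, j, hij, hne_ij⟩ := Function.not_injective_iff.mp fun hinj =>
    let ⟨σ, hσ⟩ := exists_perm_isEchelon hne hinj; hnot σ hσ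
  refine ⟨composeAt t i j, pairStep_composeAt t hne_ij, strictLowerTri_composeAt ht i j,
    sum_composeAt_lt (fun _ b => n - leadIdx b) ?_⟩
  have hlt := (ht i).lt_leadIdx_add_add_mulVec (leadIdx_lt_iff_ne_zero.mpr (hne i)) hij
  have hle := leadIdx_le ((t i).2 + (t j).2 + (t i).1 *ᵥ (t j).2)
  simp only [composeAt_self]
  omega

theorem exists_reflTransGen_stdBasis (s : PairState n) (hs : ∀ i, StrictLowerTri n (s i).1)
    (he : IsEchelon s) :
    ∃ t, ReflTransGen (pairStep n) s t ∧ ∀ i, (t i).2 = stdBasis n i := by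
  refine (exists_reflTransGen_of_measure
    (P := fun t : PairState n => (∀ i, StrictLowerTri n (t i).1) ∧ IsEchelon t)
    (fun t => ∑ k, (n - leadIdx ((t k).2 + stdBasis n k))) ?_ s ⟨hs, he⟩).imp
    fun _ ⟨hst, _, ht⟩ => ⟨hst, ht⟩
  rintro t ⟨ht, hte⟩ hQ
  obtain ⟨i, hi⟩ := not_forall.mp hQ
  set d := (t i).2 + stdBasis n i with hd_def
  have hd : leadIdx d < n := leadIdx_lt_iff_ne_zero.mpr fun h0 =>
    hi (by rwa [add_eq_zero_iff_eq_neg, ZModModule.neg_eq_self] at h0)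
  let m : Fin n := ⟨leadIdx d, hd⟩
  have him : (i : ℕ) < leadIdx d := by
    have := lt_leadIdx_add (c := stdBasis n i) (by rw [hte i]; exact i.2)
      (by rw [hte i, leadIdx_stdBasis])
    rwa [hte i] at this
  have hraise : leadIdx d < leadIdx ((composeAt t i m i).2 + stdBasis n i) := by
    convert (ht i).lt_leadIdx_add_add_mulVec hd (hte m).symm using 2
    simp only [composeAt_self, hd_def]
    abel
  refine ⟨composeAt t i m, pairStep_composeAt t (Fin.ne_of_lt (show i < m from him)),
    ⟨strictLowerTri_composeAt ht i m, ?_⟩,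
    sum_composeAt_lt (fun k b => n - leadIdx (b + stdBasis n k)) ?_⟩
  · intro k
    by_cases hk : k = i
    · subst hk
      -- over `𝔽₂`, `bₖ = eₖ + (bₖ + eₖ)` and `ν(eₖ) = k < ν(bₖ + eₖ)`
      have hlt : leadIdx (stdBasis n k) < leadIdx ((composeAt t k m k).2 + stdBasis n k) := by
        rw [leadIdx_stdBasis]; exact him.trans hraise
      have := leadIdx_add_of_lt hlt
      rwa [add_left_comm, ZModModule.add_self, add_zero, leadIdx_stdBasis] at this
    · rw [composeAt_of_ne t m hk]; exact hte k
  · have hle := leadIdx_le ((composeAt t i m i).2 + stdBasis n i)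
    change _ < n - leadIdx d
    omega

end PairState

/-- From any initial state whose matrices are strictly lower triangular,
a finite sequence of swaps and composes reaches a state with `bᵢ = eᵢ` for all `i`, or
a state with `bᵢ = 0` for some `i`. -/
theorem stmt15 (n : ℕ) (s : PairState n)
    (hs : ∀ i, StrictLowerTri n (s i).1) :
    ∃ t : PairState n, Relation.ReflTransGen (pairStep n) s t ∧
      ((∀ i, (t i).2 = stdBasis n i) ∨ (∃ i, (t i).2 = 0)) := by
  obtain ⟨t, hst, ht, ⟨i, hi⟩ | ⟨σ, hσ⟩⟩ := exists_reflTransGen_eq_zero_or_isEchelon s hs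
  · exact ⟨t, hst, .inr ⟨i, hi⟩⟩
  obtain ⟨u, htu, hu⟩ := exists_reflTransGen_stdBasis (t ∘ σ) (fun k => ht (σ k)) hσ
  exact ⟨u, hst.trans ((reflTransGen_pairStep_comp_perm t σ).trans htu), .inl hu⟩
end
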